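/- arXiv:2307.15599 — 6 statements merged into one kernel-verified Lean document; each statement's English description precedes it below -/
import Mathlib

section
/- Let g : [-Q̄, Q̄] → ℝ be continuous, and suppose (Q, Q', λ) ∈ [-Q̄,Q̄]² × [0,1] minimizes C_g(Q,Q',λ) := g((1-λ)Q + λQ') - (1-λ)g(Q) - λg(Q'). Then, with ĝ the continuous concave envelope of g: ĝ(Q) = g(Q), ĝ(Q') = g(Q'), ĝ((1-λ)Q + λQ') = (1-λ)ĝ(Q) + λĝ(Q'), and the point (1-λ)Q + λQ' maximizes ĝ - g over [-Q̄, Q̄]. -/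
lemma affine_concaveOn (s : Set ℝ) (hs : Convex ℝ s) (c b x0 : ℝ) :
    ConcaveOn ℝ s (fun y => c + b * (y - x0)) := by
  refine ⟨hs, fun x hx y hy p q hp hq hpq => ?_⟩
  simp only [smul_eq_mul]
  have h : p * (c + b * (x - x0)) + q * (c + b * (y - x0))
      = c + b * (p * x + q * y - x0) := by
    have : q = 1 - p := by linarith
    subst this; ring
  linarith [h.le]

lemma slope_exists (Qb m : ℝ) (hQb : 0 < Qb) (hm : m < 0) (g : ℝ → ℝ)
    (hg : ContinuousOn g (Set.Icc (-Qb) Qb))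
    (hmin : ∀ R ∈ Set.Icc (-Qb) Qb, ∀ R' ∈ Set.Icc (-Qb) Qb, ∀ l ∈ Set.Icc (0:ℝ) 1,
       m ≤ g ((1 - l) * R + l * R') - (1 - l) * g R - l * g R')
    (x : ℝ) (hx : x ∈ Set.Icc (-Qb) Qb) (hxlt : x < Qb) :
    ∃ s : ℝ, ∀ y ∈ Set.Icc (-Qb) Qb, g y ≤ (g x - m) + s * (y - x) := by
  set T : Set ℝ := (fun y => (g y - g x + m) / (y - x)) '' Set.Ioc x Qb with hT
  have hne : T.Nonempty := ⟨_, ⟨Qb, ⟨hxlt, le_refl _⟩, rfl⟩⟩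
  obtain ⟨C, hC⟩ := isCompact_Icc.exists_bound_of_continuousOn hg
  have hC0 : 0 ≤ C := le_trans (norm_nonneg _) (hC Qb ⟨by linarith, le_refl _⟩)
  obtain ⟨δ, hδ0, hδ⟩ := Metric.continuousWithinAt_iff.mp (hg x hx) (-m) (by linarith)
  have hbdd : BddAbove T := by
    refine ⟨max 0 ((2*C)/δ), ?_⟩
    rintro r ⟨y, ⟨hy1, hy2⟩, rfl⟩
    have hyI : y ∈ Set.Icc (-Qb) Qb := ⟨le_trans hx.1 hy1.le, hy2⟩
    by_cases hyd : dist y x < δ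
    · have h1 : |g y - g x| < -m := by
        have := hδ hyI hyd; rwa [Real.dist_eq] at this
      have hnum : g y - g x + m < 0 := by
        rcases abs_lt.mp h1 with ⟨_, h⟩; linarith
      have : (g y - g x + m) / (y - x) < 0 :=
        div_neg_of_neg_of_pos hnum (by linarith)
      exact le_trans this.le (le_max_left _ _)
    · have hdy : δ ≤ y - x := by
        rw [Real.dist_eq, not_lt] at hyd
        rwa [abs_of_pos (by linarith)] at hyd
      have hnum : g y - g x + m ≤ 2*C := by
        simp only [Real.norm_eq_abs] at hC
        have h1 : g y ≤ C := (abs_le.mp (hC y hyI)).2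
        have h2 : -C ≤ g x := (abs_le.mp (hC x hx)).1
        linarith
      have h1 : (g y - g x + m) / (y - x) ≤ (2*C) / (y - x) := by
        gcongr
      have h2 : (2*C) / (y - x) ≤ (2*C) / δ := by gcongr
      exact le_trans (h1.trans h2) (le_max_right _ _)
  refine ⟨sSup T, fun y hy => ?_⟩
  rcases lt_trichotomy y x with hlt | heq | hgt
  · have hub : ∀ r ∈ T, r ≤ (g x - m - g y) / (x - y) := by
      rintro r ⟨z, ⟨hz1, hz2⟩, rfl⟩
      rw [div_le_div_iff₀ (by linarith) (by linarith)]
      set t := (x - y) / (z - y) with htdef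
      have hzy : 0 < z - y := by linarith
      have hzy' : z - y ≠ 0 := ne_of_gt hzy
      have ht0 : 0 ≤ t := div_nonneg (by linarith) hzy.le
      have ht1 : t ≤ 1 := (div_le_one hzy).mpr (by linarith)
      have hcombo : (1 - t) * y + t * z = x := by
        rw [htdef]; field_simp; ring
      have H := hmin y ⟨hy.1, by linarith⟩ z ⟨by linarith [hx.1], hz2⟩ t ⟨ht0, ht1⟩
      rw [hcombo] at H
      have e1 : t * (z - y) = x - y := by rw [htdef]; field_simp
      have e2 : t * (z - y) * g y = (x - y) * g y := by rw [e1]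
      have e3 : t * (z - y) * g z = (x - y) * g z := by rw [e1]
      nlinarith [mul_le_mul_of_nonneg_right H hzy.le, e2, e3]
    have hs : sSup T ≤ (g x - m - g y) / (x - y) := csSup_le hne hub
    have := (le_div_iff₀ (show (0:ℝ) < x - y by linarith)).mp hs
    nlinarith [this]
  · subst heq; simp; linarith
  · have hmem : (g y - g x + m) / (y - x) ∈ T := ⟨y, ⟨hgt, hy.2⟩, rfl⟩
    have hs := le_csSup hbdd hmem
    have := (div_le_iff₀ (show (0:ℝ) < y - x by linarith)).mp hs
    linarith

lemma le_chord (Qb m : ℝ) (g : ℝ → ℝ) (Q Q' lam : ℝ)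
    (hQ : Q ∈ Set.Icc (-Qb) Qb) (hQ' : Q' ∈ Set.Icc (-Qb) Qb)
    (hQQ : Q < Q') (hl0 : 0 < lam) (hl1 : lam < 1) (hm : m ≤ 0)
    (hmval : m = g ((1 - lam) * Q + lam * Q') - (1 - lam) * g Q - lam * g Q')
    (hmin : ∀ R ∈ Set.Icc (-Qb) Qb, ∀ R' ∈ Set.Icc (-Qb) Qb, ∀ l ∈ Set.Icc (0:ℝ) 1,
       m ≤ g ((1 - l) * R + l * R') - (1 - l) * g R - l * g R')
    (y : ℝ) (hy : y ∈ Set.Icc (-Qb) Qb) :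
    g y ≤ g Q + ((g Q' - g Q) / (Q' - Q)) * (y - Q) := by
  set xs := (1 - lam) * Q + lam * Q' with hxs
  have hQn : (0:ℝ) < Q' - Q := by linarith
  have hxsQ : Q < xs := by nlinarith [hxs]
  have hxsQ' : xs < Q' := by nlinarith [hxs]
  have hgxs : g xs = (1 - lam) * g Q + lam * g Q' + m := by rw [hmval]; ring
  have exQ : xs - Q = lam * (Q' - Q) := by rw [hxs]; ring
  have exQ' : Q' - xs = (1 - lam) * (Q' - Q) := by rw [hxs]; ring
  have h1l : (0:ℝ) < 1 - lam := by linarith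
  suffices hkey : (g y - g Q) * (Q' - Q) ≤ (g Q' - g Q) * (y - Q) by
    have h1 : g y - g Q ≤ ((g Q' - g Q) * (y - Q)) / (Q' - Q) :=
      (le_div_iff₀ hQn).mpr hkey
    have h2 : ((g Q' - g Q) * (y - Q)) / (Q' - Q)
        = (g Q' - g Q) / (Q' - Q) * (y - Q) := by ring
    linarith
  rcases lt_trichotomy y xs with hlt | heq | hgt
  · have hyQ' : (0:ℝ) < Q' - y := by linarith
    set t := (Q' - xs) / (Q' - y) with htdef
    have hne : Q' - y ≠ 0 := ne_of_gt hyQ'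
    have ht0 : 0 < t := div_pos (by linarith) hyQ'
    have ht1 : t < 1 := (div_lt_one hyQ').mpr (by linarith)
    have hcombo : (1 - t) * Q' + t * y = xs := by rw [htdef]; field_simp; ring
    have H := hmin Q' hQ' y hy t ⟨ht0.le, ht1.le⟩
    rw [hcombo] at H
    have e1 : t * (Q' - y) = Q' - xs := by rw [htdef]; field_simp
    have H' : t * g y ≤ (t - (1 - lam)) * g Q' + (1 - lam) * g Q := by
      have := hgxs; linarith
    have H2 := mul_le_mul_of_nonneg_right H' hyQ'.le
    have e2 : t * (Q' - y) * g y = (1 - lam) * (Q' - Q) * g y := by rw [e1, exQ']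
    have e3 : t * (Q' - y) * g Q' = (1 - lam) * (Q' - Q) * g Q' := by rw [e1, exQ']
    nlinarith [H2, e2, e3, hQn, hl0, hl1, h1l]
  · subst heq
    have e4 : g xs * (Q' - Q) = ((1 - lam) * g Q + lam * g Q' + m) * (Q' - Q) := by
      rw [hgxs]
    have e5 : (g Q' - g Q) * (xs - Q) = (g Q' - g Q) * (lam * (Q' - Q)) := by
      rw [exQ]
    nlinarith [mul_nonpos_of_nonpos_of_nonneg hm hQn.le, e4, e5]
  · have hyQ : (0:ℝ) < y - Q := by linarith
    set t := (xs - Q) / (y - Q) with htdef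
    have hne : y - Q ≠ 0 := ne_of_gt hyQ
    have ht0 : 0 < t := div_pos (by linarith) hyQ
    have ht1 : t < 1 := (div_lt_one hyQ).mpr (by linarith)
    have hcombo : (1 - t) * Q + t * y = xs := by rw [htdef]; field_simp; ring
    have H := hmin Q hQ y hy t ⟨ht0.le, ht1.le⟩
    rw [hcombo] at H
    have e1 : t * (y - Q) = xs - Q := by rw [htdef]; field_simp
    have H' : t * g y ≤ (t - lam) * g Q + lam * g Q' := by
      have := hgxs; linarith
    have H2 := mul_le_mul_of_nonneg_right H' hyQ.le
    have e2 : t * (y - Q) * g y = lam * (Q' - Q) * g y := by rw [e1, exQ]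
    have e3 : t * (y - Q) * g Q = lam * (Q' - Q) * g Q := by rw [e1, exQ]
    nlinarith [H2, e2, e3, hQn, hl0, hl1, h1l]

/-- If `(Q, Q', λ)` minimizes the concavity defect
`C_g(Q,Q',λ) = g((1-λ)Q + λQ') - (1-λ)g(Q) - λg(Q')` of a continuous function `g`
on `[-Q̄,Q̄]² × [0,1]`, then the continuous concave envelope `ĝ` of `g` satisfies
`ĝ(Q) = g(Q)`, `ĝ(Q') = g(Q')`, `ĝ((1-λ)Q + λQ') = (1-λ)ĝ(Q) + λĝ(Q')`, and
`(1-λ)Q + λQ'` maximizes `ĝ - g` over `[-Q̄, Q̄]`. -/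
theorem stmt4 (Qb : ℝ) (hQb : 0 < Qb) (g : ℝ → ℝ)
    (hg : ContinuousOn g (Set.Icc (-Qb) Qb))
    (genv : ℝ → ℝ)
    (hdef : ∀ x ∈ Set.Icc (-Qb) Qb, genv x =
      sInf {r : ℝ | ∃ h : ℝ → ℝ, ContinuousOn h (Set.Icc (-Qb) Qb) ∧
        ConcaveOn ℝ (Set.Icc (-Qb) Qb) h ∧
        (∀ z ∈ Set.Icc (-Qb) Qb, g z ≤ h z) ∧ r = h x})
    (Q Q' lam : ℝ) (hQ : Q ∈ Set.Icc (-Qb) Qb) (hQ' : Q' ∈ Set.Icc (-Qb) Qb)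
    (hlam : lam ∈ Set.Icc (0:ℝ) 1)
    (hmin : ∀ R ∈ Set.Icc (-Qb) Qb, ∀ R' ∈ Set.Icc (-Qb) Qb, ∀ l ∈ Set.Icc (0:ℝ) 1,
      g ((1 - lam) * Q + lam * Q') - (1 - lam) * g Q - lam * g Q' ≤
      g ((1 - l) * R + l * R') - (1 - l) * g R - l * g R') :
    genv Q = g Q ∧ genv Q' = g Q' ∧
    genv ((1 - lam) * Q + lam * Q') = (1 - lam) * genv Q + lam * genv Q' ∧
    IsMaxOn (fun x => genv x - g x) (Set.Icc (-Qb) Qb) ((1 - lam) * Q + lam * Q') := by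
  set m := g ((1 - lam) * Q + lam * Q') - (1 - lam) * g Q - lam * g Q' with hmdef
  have hxsI : (1 - lam) * Q + lam * Q' ∈ Set.Icc (-Qb) Qb := by
    have := (convex_Icc (-Qb) Qb) hQ hQ'
      (show (0:ℝ) ≤ 1 - lam by linarith [hlam.2]) hlam.1 (by ring)
    simpa using this
  have hbddS : ∀ x ∈ Set.Icc (-Qb) Qb, BddBelow {r : ℝ | ∃ h : ℝ → ℝ,
      ContinuousOn h (Set.Icc (-Qb) Qb) ∧ ConcaveOn ℝ (Set.Icc (-Qb) Qb) h ∧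
      (∀ z ∈ Set.Icc (-Qb) Qb, g z ≤ h z) ∧ r = h x} := by
    intro x hx
    refine ⟨g x, ?_⟩
    rintro r ⟨h, hc, hcc, hmaj, rfl⟩
    exact hmaj x hx
  have hm0 : m ≤ 0 := by
    have h := hmin Q hQ Q hQ 0 ⟨le_refl 0, zero_le_one⟩
    rw [show ((1:ℝ) - 0) * Q + 0 * Q = Q from by ring] at h
    linarith
  rcases eq_or_lt_of_le hm0 with hmz | hmneg
  · -- m = 0 : g is concave
    have hconc : ConcaveOn ℝ (Set.Icc (-Qb) Qb) g := by
      refine ⟨convex_Icc _ _, fun x hx y hy a b ha hb hab => ?_⟩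
      have h := hmin x hx y hy b ⟨hb, by linarith⟩
      simp only [smul_eq_mul]
      have ha' : a = 1 - b := by linarith
      rw [ha']
      linarith [hmz ▸ h]
    have heqg : ∀ x ∈ Set.Icc (-Qb) Qb, genv x = g x := by
      intro x hx
      have hmem : g x ∈ {r : ℝ | ∃ h : ℝ → ℝ,
          ContinuousOn h (Set.Icc (-Qb) Qb) ∧ ConcaveOn ℝ (Set.Icc (-Qb) Qb) h ∧
          (∀ z ∈ Set.Icc (-Qb) Qb, g z ≤ h z) ∧ r = h x} :=
        ⟨g, hg, hconc, fun z _ => le_refl _, rfl⟩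
      rw [hdef x hx]
      refine le_antisymm (csInf_le (hbddS x hx) hmem) ?_
      refine le_csInf ⟨g x, hmem⟩ ?_
      rintro r ⟨h, hc, hcc, hmaj, rfl⟩
      exact hmaj x hx
    have hxseq : g ((1 - lam) * Q + lam * Q') = (1 - lam) * g Q + lam * g Q' := by
      have := hmz; linarith
    refine ⟨heqg Q hQ, heqg Q' hQ', ?_, ?_⟩
    · rw [heqg _ hxsI, heqg Q hQ, heqg Q' hQ']
      exact hxseq
    · refine isMaxOn_iff.mpr fun x hx => ?_
      simp only [heqg x hx, heqg _ hxsI]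
      linarith
  · -- m < 0
    have hQne : Q ≠ Q' := by
      intro h
      rw [h] at hmdef
      rw [show (1 - lam) * Q' + lam * Q' = Q' from by ring] at hmdef
      linarith [hmdef]
    have hl0 : 0 < lam := by
      rcases eq_or_lt_of_le hlam.1 with h0 | h0
      · exfalso
        rw [← h0] at hmdef
        rw [show ((1:ℝ) - 0) * Q + 0 * Q' = Q from by ring] at hmdef
        have : m = 0 := by rw [hmdef]; ring
        linarith
      · exact h0
    have hl1 : lam < 1 := by
      rcases eq_or_lt_of_le hlam.2 with h0 | h0
      · exfalso
        rw [h0] at hmdef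
        rw [show ((1:ℝ) - 1) * Q + 1 * Q' = Q' from by ring] at hmdef
        have : m = 0 := by rw [hmdef]; ring
        linarith
      · exact h0
    have h1l : (0:ℝ) < 1 - lam := by linarith
    set sA := (g Q' - g Q) / (Q' - Q) with hsA
    have hchord : ∀ y ∈ Set.Icc (-Qb) Qb, g y ≤ g Q + sA * (y - Q) := by
      rcases hQne.lt_or_gt with hlt | hlt
      · intro y hy
        exact le_chord Qb m g Q Q' lam hQ hQ' hlt hl0 hl1 hmneg.le hmdef hmin y hy
      · intro y hy
        have hmval2 : m = g ((1 - (1 - lam)) * Q' + (1 - lam) * Q)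
            - (1 - (1 - lam)) * g Q' - (1 - lam) * g Q := by
          rw [show (1 - (1 - lam)) * Q' + (1 - lam) * Q = (1 - lam) * Q + lam * Q'
            from by ring]
          rw [hmdef]; ring
        have h := le_chord Qb m g Q' Q (1 - lam) hQ' hQ hlt (by linarith)
          (by linarith) hmneg.le hmval2 hmin y hy
        have hd : (g Q - g Q') / (Q - Q') = sA := by
          rw [hsA, show g Q - g Q' = -(g Q' - g Q) from by ring,
            show Q - Q' = -(Q' - Q) from by ring, neg_div_neg_eq]
        rw [hd] at h
        have hQn : Q' - Q ≠ 0 := sub_ne_zero.mpr (Ne.symm hQne)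
        have esA : sA * (Q' - Q) = g Q' - g Q := by
          rw [hsA]; field_simp
        have e : sA * (y - Q) = sA * (y - Q') + sA * (Q' - Q) := by ring
        linarith
    have hQn : Q' - Q ≠ 0 := sub_ne_zero.mpr (Ne.symm hQne)
    have esA : sA * (Q' - Q) = g Q' - g Q := by rw [hsA]; field_simp
    have hAcont : ContinuousOn (fun y => g Q + sA * (y - Q)) (Set.Icc (-Qb) Qb) :=
      (continuous_const.add (continuous_const.mul
        (continuous_id.sub continuous_const))).continuousOn
    have hAconc := affine_concaveOn (Set.Icc (-Qb) Qb) (convex_Icc _ _) (g Q) sA Q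
    have hmemA : ∀ x : ℝ, (g Q + sA * (x - Q)) ∈ {r : ℝ | ∃ h : ℝ → ℝ,
        ContinuousOn h (Set.Icc (-Qb) Qb) ∧ ConcaveOn ℝ (Set.Icc (-Qb) Qb) h ∧
        (∀ z ∈ Set.Icc (-Qb) Qb, g z ≤ h z) ∧ r = h x} :=
      fun x => ⟨fun y => g Q + sA * (y - Q), hAcont, hAconc, hchord, rfl⟩
    have hgenv_leA : ∀ x ∈ Set.Icc (-Qb) Qb, genv x ≤ g Q + sA * (x - Q) := by
      intro x hx
      rw [hdef x hx]
      exact csInf_le (hbddS x hx) (hmemA x)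
    have hge : ∀ x ∈ Set.Icc (-Qb) Qb, g x ≤ genv x := by
      intro x hx
      rw [hdef x hx]
      refine le_csInf ⟨_, hmemA x⟩ ?_
      rintro r ⟨h, hc, hcc, hmaj, rfl⟩
      exact hmaj x hx
    have g1 : genv Q = g Q := by
      have h := hgenv_leA Q hQ
      have : g Q + sA * (Q - Q) = g Q := by ring
      rw [this] at h
      exact le_antisymm h (hge Q hQ)
    have g2 : genv Q' = g Q' := by
      have h := hgenv_leA Q' hQ'
      have : g Q + sA * (Q' - Q) = g Q' := by linarith [esA]
      rw [this] at h
      exact le_antisymm h (hge Q' hQ')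
    have hAxs : g Q + sA * ((1 - lam) * Q + lam * Q' - Q)
        = (1 - lam) * g Q + lam * g Q' := by
      have e : sA * ((1 - lam) * Q + lam * Q' - Q) = lam * (sA * (Q' - Q)) := by ring
      rw [e, esA]; ring
    have g3 : genv ((1 - lam) * Q + lam * Q') = (1 - lam) * g Q + lam * g Q' := by
      refine le_antisymm ?_ ?_
      · have h := hgenv_leA _ hxsI
        rwa [hAxs] at h
      · rw [hdef _ hxsI]
        refine le_csInf ⟨_, hmemA _⟩ ?_
        rintro r ⟨h, hc, hcc, hmaj, rfl⟩
        have hcav := hcc.2 hQ hQ' (show (0:ℝ) ≤ 1 - lam by linarith) hlam.1 (by ring)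
        simp only [smul_eq_mul] at hcav
        have m1 := mul_le_mul_of_nonneg_left (hmaj Q hQ) (show (0:ℝ) ≤ 1 - lam by linarith)
        have m2 := mul_le_mul_of_nonneg_left (hmaj Q' hQ') hlam.1
        linarith
    have hub : ∀ x ∈ Set.Icc (-Qb) Qb, genv x ≤ g x - m := by
      intro x hx
      by_cases hxlt : x < Qb
      · obtain ⟨s, hs⟩ := slope_exists Qb m hQb hmneg g hg hmin x hx hxlt
        have hmemL : (g x - m + s * (x - x)) ∈ {r : ℝ | ∃ h : ℝ → ℝ,
            ContinuousOn h (Set.Icc (-Qb) Qb) ∧ ConcaveOn ℝ (Set.Icc (-Qb) Qb) h ∧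
            (∀ z ∈ Set.Icc (-Qb) Qb, g z ≤ h z) ∧ r = h x} :=
          ⟨fun y => (g x - m) + s * (y - x),
            (continuous_const.add (continuous_const.mul
              (continuous_id.sub continuous_const))).continuousOn,
            affine_concaveOn _ (convex_Icc _ _) _ _ _, hs, rfl⟩
        have h : genv x ≤ g x - m + s * (x - x) := by
          rw [hdef x hx]; exact csInf_le (hbddS x hx) hmemL
        have e : g x - m + s * (x - x) = g x - m := by ring
        rw [e] at h
        exact h
      · push_neg at hxlt
        have hxeq : x = Qb := le_antisymm hx.2 hxlt
        have hg2 : ContinuousOn (fun y => g (-y)) (Set.Icc (-Qb) Qb) := by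
          apply ContinuousOn.comp hg (continuous_neg.continuousOn)
          intro y hy
          simp only [Set.mem_Icc] at hy ⊢
          exact ⟨by linarith [hy.2], by linarith [hy.1]⟩
        have hmin2 : ∀ R ∈ Set.Icc (-Qb) Qb, ∀ R' ∈ Set.Icc (-Qb) Qb,
            ∀ l ∈ Set.Icc (0:ℝ) 1, m ≤ (fun y => g (-y)) ((1 - l) * R + l * R')
              - (1 - l) * (fun y => g (-y)) R - l * (fun y => g (-y)) R' := by
          intro R hR R' hR' l hl
          have h := hmin (-R) ⟨by linarith [hR.2], by linarith [hR.1]⟩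
            (-R') ⟨by linarith [hR'.2], by linarith [hR'.1]⟩ l hl
          simp only
          rw [show -((1 - l) * R + l * R') = (1 - l) * (-R) + l * (-R') from by ring]
          exact h
        obtain ⟨s, hs⟩ := slope_exists Qb m hQb hmneg (fun y => g (-y)) hg2 hmin2
          (-Qb) ⟨le_refl _, by linarith⟩ (by linarith)
        have hmaj : ∀ y ∈ Set.Icc (-Qb) Qb, g y ≤ (g Qb - m) + (-s) * (y - Qb) := by
          intro y hy
          have h := hs (-y) ⟨by linarith [hy.2], by linarith [hy.1]⟩
          simp only [neg_neg] at h
          linarith [h, show s * (-y - -Qb) = (-s) * (y - Qb) from by ring]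
        have hmemL : (g Qb - m + (-s) * (x - Qb)) ∈ {r : ℝ | ∃ h : ℝ → ℝ,
            ContinuousOn h (Set.Icc (-Qb) Qb) ∧ ConcaveOn ℝ (Set.Icc (-Qb) Qb) h ∧
            (∀ z ∈ Set.Icc (-Qb) Qb, g z ≤ h z) ∧ r = h x} :=
          ⟨fun y => (g Qb - m) + (-s) * (y - Qb),
            (continuous_const.add (continuous_const.mul
              (continuous_id.sub continuous_const))).continuousOn,
            affine_concaveOn _ (convex_Icc _ _) _ _ _, hmaj, rfl⟩
        have h : genv x ≤ g Qb - m + (-s) * (x - Qb) := by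
          rw [hdef x hx]; exact csInf_le (hbddS x hx) hmemL
        rw [hxeq]
        rw [hxeq] at h
        linarith [h]
    refine ⟨g1, g2, by rw [g3, g1, g2], ?_⟩
    refine isMaxOn_iff.mpr fun x hx => ?_
    have h1 := hub x hx
    have h2 : genv ((1 - lam) * Q + lam * Q') - g ((1 - lam) * Q + lam * Q') = -m := by
      rw [g3]; rw [hmdef]; ring
    linarith
end

section
/- Let g : [-Q̄, Q̄] → ℝ be continuous, Q̃ ∈ [-Q̄, Q̄], and define A(Q, Q') := g(Q̃) - ((Q'-Q̃)/(Q'-Q)) g(Q) - ((Q̃-Q)/(Q'-Q)) g(Q') for Q ≤ Q̃ ≤ Q' with Q < Q', and A(Q,Q') := 0 if Q = Q'. If min A = 0 over {(Q,Q') : -Q̄ ≤ Q ≤ Q̃ ≤ Q' ≤ Q̄}, then the continuous concave envelope ĝ of g satisfies ĝ(Q̃) = g(Q̃). -/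
/-!
`A(Q, Q') ≥ 0` says that the chord of `g` over `[Q, Q']` lies below `g` at `Q̃`, i.e. every slope
of `g` to the right of `Q̃` is at most every slope to the left of it. When `Q̃` is interior, any
number between these slopes is the slope of a line through `(Q̃, g(Q̃))` above `g`: an affine, hence
continuous concave, majorant touching `g` at `Q̃`. At an endpoint the slopes may blow up, but
continuity and boundedness of `g` still give, for every `ε > 0`, a steep line through
`(Q̃, g(Q̃) + ε)` above `g`. So `ĝ(Q̃) ≤ g(Q̃) + ε` for all `ε > 0`.
-/

open Set

theorem ContinuousWithinAt.exists_le_add_mul_dist {X : Type*} [PseudoMetricSpace X] {s : Set X}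
    {f : X → ℝ} {x₀ : X} (hf : ContinuousWithinAt f s x₀) (hbdd : BddAbove (f '' s))
    {ε : ℝ} (hε : 0 < ε) : ∃ M, ∀ x ∈ s, f x ≤ f x₀ + ε + M * dist x x₀ := by
  obtain ⟨δ, hδ, hnear⟩ := Metric.continuousWithinAt_iff.1 hf ε hε
  obtain ⟨C, hC⟩ := hbdd
  set M := max 0 ((C - f x₀) / δ)
  have hM : 0 ≤ M := le_max_left _ _
  refine ⟨M, fun x hx => ?_⟩
  rcases lt_or_ge (dist x x₀) δ with hclose | hfar
  · have hfx : f x < f x₀ + ε := by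
      have := hnear hx hclose
      rw [Real.dist_eq, abs_lt] at this
      linarith
    nlinarith [mul_nonneg hM (dist_nonneg (x := x) (y := x₀))]
  · have hCδ : C - f x₀ ≤ M * δ := by
      rw [← div_le_iff₀ hδ]
      exact le_max_right _ _
    nlinarith [hC (mem_image_of_mem f hx), mul_le_mul_of_nonneg_left hfar hM]

theorem slope_le_slope_of_chord_le {f : ℝ → ℝ} {x y z : ℝ} (hxy : x < y) (hyz : y < z)
    (hchord : (z - y) / (z - x) * f x + (y - x) / (z - x) * f z ≤ f y) :
    slope f y z ≤ slope f x y := by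
  have hxz : 0 < z - x := by linarith
  rw [div_mul_eq_mul_div, div_mul_eq_mul_div, ← add_div, div_le_iff₀ hxz] at hchord
  rw [slope_def_field, slope_def_field, div_le_div_iff₀ (by linarith) (by linarith)]
  nlinarith

theorem exists_le_add_mul_sub_of_slope_le {s : Set ℝ} {f : ℝ → ℝ} {x₀ : ℝ}
    (hleft : ∃ a ∈ s, a < x₀) (hright : ∃ b ∈ s, x₀ < b)
    (hslope : ∀ x ∈ s, ∀ y ∈ s, x < x₀ → x₀ < y → slope f x₀ y ≤ slope f x x₀) :
    ∃ m, ∀ x ∈ s, f x ≤ f x₀ + m * (x - x₀) := by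
  obtain ⟨a, ha, hax₀⟩ := hleft
  obtain ⟨b, hb, hx₀b⟩ := hright
  set R := slope f x₀ '' {y ∈ s | x₀ < y}
  have hR : BddAbove R := ⟨slope f a x₀, by
    rintro _ ⟨y, ⟨hy, hx₀y⟩, rfl⟩
    exact hslope a ha y hy hax₀ hx₀y⟩
  refine ⟨sSup R, fun x hx => ?_⟩
  rcases lt_trichotomy x x₀ with hxx₀ | rfl | hx₀x
  · have hle : sSup R ≤ slope f x x₀ := csSup_le ⟨_, b, ⟨hb, hx₀b⟩, rfl⟩ <| by
      rintro _ ⟨y, ⟨hy, hx₀y⟩, rfl⟩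
      exact hslope x hx y hy hxx₀ hx₀y
    rw [slope_def_field, le_div_iff₀ (by linarith)] at hle
    linarith
  · simp
  · have hle : slope f x₀ x ≤ sSup R := le_csSup hR ⟨x, ⟨hx, hx₀x⟩, rfl⟩
    rw [slope_def_field, div_le_iff₀ (by linarith)] at hle
    linarith

theorem exists_affine_majorant_Icc_of_slope_le {a b x₀ : ℝ} {f : ℝ → ℝ}
    (hf : ContinuousOn f (Icc a b)) (hx₀ : x₀ ∈ Icc a b)
    (hslope : ∀ x ∈ Icc a b, ∀ y ∈ Icc a b, x < x₀ → x₀ < y → slope f x₀ y ≤ slope f x x₀)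
    {ε : ℝ} (hε : 0 < ε) : ∃ m, ∀ x ∈ Icc a b, f x ≤ f x₀ + ε + m * (x - x₀) := by
  obtain ⟨M, hM⟩ :=
    (hf x₀ hx₀).exists_le_add_mul_dist (isCompact_Icc.bddAbove_image hf) hε
  rcases hx₀.1.eq_or_lt with rfl | hax₀
  · refine ⟨M, fun x hx => ?_⟩
    simpa [Real.dist_eq, abs_of_nonneg (sub_nonneg.2 hx.1)] using hM x hx
  rcases hx₀.2.eq_or_lt with rfl | hx₀b
  · refine ⟨-M, fun x hx => ?_⟩
    have := hM x hx
    rw [Real.dist_eq, abs_of_nonpos (sub_nonpos.2 hx.2)] at this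
    linarith
  obtain ⟨m, hm⟩ := exists_le_add_mul_sub_of_slope_le
    ⟨a, left_mem_Icc.2 (hx₀.1.trans hx₀.2), hax₀⟩ ⟨b, right_mem_Icc.2 (hx₀.1.trans hx₀.2), hx₀b⟩
    hslope
  exact ⟨m, fun x hx => by linarith [hm x hx]⟩

theorem sInf_concave_majorants_eq {a b x₀ : ℝ} {g : ℝ → ℝ} (hx₀ : x₀ ∈ Icc a b)
    (hmaj : ∀ ε > 0, ∃ m, ∀ x ∈ Icc a b, g x ≤ g x₀ + ε + m * (x - x₀)) :
    sInf {r : ℝ | ∃ h : ℝ → ℝ, ContinuousOn h (Icc a b) ∧ ConcaveOn ℝ (Icc a b) h ∧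
      (∀ z ∈ Icc a b, g z ≤ h z) ∧ r = h x₀} = g x₀ := by
  set S := {r : ℝ | ∃ h : ℝ → ℝ, ContinuousOn h (Icc a b) ∧ ConcaveOn ℝ (Icc a b) h ∧
      (∀ z ∈ Icc a b, g z ≤ h z) ∧ r = h x₀}
  have hmem : ∀ ε > 0, g x₀ + ε ∈ S := fun ε hε => by
    obtain ⟨m, hm⟩ := hmaj ε hε
    refine ⟨fun x => m * x + (g x₀ + ε - m * x₀), by fun_prop,
      ((LinearMap.mul ℝ ℝ m).concaveOn (convex_Icc a b)).add_const _,
      fun z hz => by linarith [hm z hz], by ring⟩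
  have hlower : ∀ r ∈ S, g x₀ ≤ r := by
    rintro _ ⟨h, -, -, hgh, rfl⟩
    exact hgh x₀ hx₀
  refine le_antisymm (le_of_forall_pos_le_add fun ε hε => csInf_le ⟨_, hlower⟩ (hmem ε hε)) ?_
  exact le_csInf ⟨_, hmem 1 one_pos⟩ hlower

theorem stmt5_general (Qb : ℝ) (g : ℝ → ℝ)
    (hg : ContinuousOn g (Set.Icc (-Qb) Qb))
    (Qt : ℝ) (hQt : Qt ∈ Set.Icc (-Qb) Qb)
    (A : ℝ → ℝ → ℝ)
    (hA : ∀ Q Q' : ℝ, A Q Q' =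
      if Q < Q' then
        g Qt - ((Q' - Qt) / (Q' - Q)) * g Q - ((Qt - Q) / (Q' - Q)) * g Q'
      else 0)
    (hAmin : ∀ Q Q' : ℝ, -Qb ≤ Q → Q ≤ Qt → Qt ≤ Q' → Q' ≤ Qb → 0 ≤ A Q Q')
    (genv : ℝ → ℝ)
    (hdef : ∀ x ∈ Set.Icc (-Qb) Qb, genv x =
      sInf {r : ℝ | ∃ h : ℝ → ℝ, ContinuousOn h (Set.Icc (-Qb) Qb) ∧
        ConcaveOn ℝ (Set.Icc (-Qb) Qb) h ∧
        (∀ z ∈ Set.Icc (-Qb) Qb, g z ≤ h z) ∧ r = h x}) :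
    genv Qt = g Qt := by
  have hslope : ∀ x ∈ Icc (-Qb) Qb, ∀ y ∈ Icc (-Qb) Qb, x < Qt → Qt < y →
      slope g Qt y ≤ slope g x Qt := by
    intro x hx y hy hxQt hQty
    have hA₀ := hAmin x y hx.1 hxQt.le hQty.le hy.2
    rw [hA, if_pos (hxQt.trans hQty)] at hA₀
    exact slope_le_slope_of_chord_le hxQt hQty (by linarith)
  rw [hdef Qt hQt]
  exact sInf_concave_majorants_eq hQt fun ε hε =>
    exists_affine_majorant_Icc_of_slope_le hg hQt hslope hε

/-- Let `g` be continuous on `[-Q̄, Q̄]`, `Q̃ ∈ [-Q̄, Q̄]`, and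
`A(Q,Q') = g(Q̃) - ((Q'-Q̃)/(Q'-Q)) g(Q) - ((Q̃-Q)/(Q'-Q)) g(Q')` for
`-Q̄ ≤ Q ≤ Q̃ ≤ Q' ≤ Q̄` with `Q < Q'`, and `A(Q,Q') = 0` if `Q = Q'`.
If the minimum of `A` over this set is `0` (i.e. `A ≥ 0` there, the value `0` being
attained at `Q = Q'`), then the continuous concave envelope `ĝ` of `g` satisfies
`ĝ(Q̃) = g(Q̃)`. -/
theorem stmt5 (Qb : ℝ) (hQb : 0 < Qb) (g : ℝ → ℝ)
    (hg : ContinuousOn g (Set.Icc (-Qb) Qb))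
    (Qt : ℝ) (hQt : Qt ∈ Set.Icc (-Qb) Qb)
    (A : ℝ → ℝ → ℝ)
    (hA : ∀ Q Q' : ℝ, A Q Q' =
      if Q < Q' then
        g Qt - ((Q' - Qt) / (Q' - Q)) * g Q - ((Qt - Q) / (Q' - Q)) * g Q'
      else 0)
    (hAmin : ∀ Q Q' : ℝ, -Qb ≤ Q → Q ≤ Qt → Qt ≤ Q' → Q' ≤ Qb → 0 ≤ A Q Q')
    (genv : ℝ → ℝ)
    (hdef : ∀ x ∈ Set.Icc (-Qb) Qb, genv x =
      sInf {r : ℝ | ∃ h : ℝ → ℝ, ContinuousOn h (Set.Icc (-Qb) Qb) ∧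
        ConcaveOn ℝ (Set.Icc (-Qb) Qb) h ∧
        (∀ z ∈ Set.Icc (-Qb) Qb, g z ≤ h z) ∧ r = h x}) :
    genv Qt = g Qt :=
  stmt5_general Qb g hg Qt hQt A hA hAmin genv hdef
end

section
/- Let g : [-Q̄, Q̄] → ℝ be a continuous concave function, k ∈ ℝ, Q̃ ∈ [-Q̄, Q̄], and define φ(q) := k·q + g(Q̃ - q) for q ∈ [Q̃ - Q̄, Q̃ + Q̄]. Then φ is continuous and concave, its left derivative satisfies φ'₋(q) = k - g'₊(Q̃ - q), and setting Q* := min(inf{R ∈ [-Q̄, Q̄) : g'₊(R) ≤ k}, Q̄), the point Q̃ - Q* maximizes φ over [0, Q̃ + Q̄]. -/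
/-!
Write `f R = g R - k R`, so that `φ q = f (Q̃ - q) + k Q̃` and `f'₊ = g'₊ - k`. By the choice
of `Q*`, `f'₊ > 0` on `[-Q̄, Q*)`; since the right derivative of a concave function is antitone,
`f'₊ ≤ 0` on `(Q*, Q̄)`. Comparing secant slopes with right derivatives, `f` is therefore
nondecreasing up to `Q*` and nonincreasing after it, and continuity at `Q*` makes `Q*` a
maximiser of `f`.
-/

open Set Filter Topology

theorem hasDerivWithinAt_Ioi_iff_tendsto_slope_zero_right {f : ℝ → ℝ} {f' x : ℝ} :
    HasDerivWithinAt f f' (Ioi x) x ↔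
      Tendsto (fun h => (f (x + h) - f x) / h) (𝓝[>] 0) (𝓝 f') := by
  rw [hasDerivWithinAt_iff_tendsto_slope' self_notMem_Ioi, ← add_zero x,
    ← map_add_left_nhdsGT, tendsto_map'_iff]
  simp [Function.comp_def, slope_def_field]

theorem hasDerivWithinAt_Iio_iff_tendsto_slope_zero_left {f : ℝ → ℝ} {f' x : ℝ} :
    HasDerivWithinAt f f' (Iio x) x ↔
      Tendsto (fun h => (f (x + h) - f x) / h) (𝓝[<] 0) (𝓝 f') := by
  rw [hasDerivWithinAt_iff_tendsto_slope' self_notMem_Iio, ← add_zero x,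
    ← map_add_left_nhdsLT, tendsto_map'_iff]
  simp [Function.comp_def, slope_def_field]

theorem ConcaveOn.le_slope_of_hasDerivWithinAt_Ioi_of_lt {S : Set ℝ} {f : ℝ → ℝ}
    {f' x y z : ℝ}
    (hfc : ConcaveOn ℝ S f) (hx : x ∈ S) (hz : z ∈ S) (hxy : x < y) (hyz : y < z)
    (hf' : HasDerivWithinAt f f' (Ioi y) y) :
    f' ≤ slope f x y := by
  refine le_of_tendsto ((hasDerivWithinAt_iff_tendsto_slope' self_notMem_Ioi).mp hf') ?_
  filter_upwards [Ioo_mem_nhdsGT hyz] with t ht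
  have ht_mem : t ∈ S := hfc.1.ordConnected.out hx hz ⟨(hxy.trans ht.1).le, ht.2.le⟩
  simpa [slope_def_field] using hfc.slope_anti_adjacent hx ht_mem hxy ht.1

theorem ConcaveOn.le_of_hasDerivWithinAt_Ioi {S : Set ℝ} {f : ℝ → ℝ} {fx fy x y z : ℝ}
    (hfc : ConcaveOn ℝ S f) (hx : x ∈ S) (hz : z ∈ S) (hxy : x < y) (hyz : y < z)
    (hfx : HasDerivWithinAt f fx (Ioi x) x) (hfy : HasDerivWithinAt f fy (Ioi y) y) :
    fy ≤ fx :=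
  (hfc.le_slope_of_hasDerivWithinAt_Ioi_of_lt hx hz hxy hyz hfy).trans <|
    hfc.slope_le_of_hasDerivWithinAt_Ioi hx
      (hfc.1.ordConnected.out hx hz ⟨hxy.le, hyz.le⟩) hxy hfx

theorem slope_nonneg_iff_of_lt {f : ℝ → ℝ} {x y : ℝ} (hxy : x < y) :
    0 ≤ slope f x y ↔ f x ≤ f y := by
  rw [slope_def_field, le_div_iff₀ (sub_pos.2 hxy), zero_mul, sub_nonneg]

theorem slope_nonpos_iff_of_lt {f : ℝ → ℝ} {x y : ℝ} (hxy : x < y) :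
    slope f x y ≤ 0 ↔ f y ≤ f x := by
  rw [slope_def_field, div_le_iff₀ (sub_pos.2 hxy), zero_mul, sub_nonpos]

theorem ConcaveOn.isMaxOn_sInf_rightDeriv_nonpos {f f' : ℝ → ℝ} {a b : ℝ}
    (hcont : ContinuousOn f (Icc a b)) (hconc : ConcaveOn ℝ (Icc a b) f)
    (hf' : ∀ x ∈ Ico a b, HasDerivWithinAt f (f' x) (Ioi x) x) :
    IsMaxOn f (Icc a b) (sInf (insert b {x | x ∈ Ico a b ∧ f' x ≤ 0})) := by
  set T := insert b {x | x ∈ Ico a b ∧ f' x ≤ 0}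
  set c := sInf T
  intro x hx
  have hT_ge : ∀ y ∈ T, a ≤ y := by rintro y (rfl | hy); exacts [hx.1.trans hx.2, hy.1.1]
  have hTbdd : BddBelow T := ⟨a, hT_ge⟩
  have hc : c ∈ Icc a b :=
    ⟨le_csInf (insert_nonempty _ _) hT_ge, csInf_le hTbdd (mem_insert _ _)⟩
  show f x ≤ f c
  rcases lt_trichotomy x c with hxc | rfl | hcx
  · refine continuousWithinAt_const.closure_le (closure_Ioo hxc.ne ▸ right_mem_Icc.2 hxc.le)
      ((hcont c hc).mono (Ioo_subset_Icc_self.trans (Icc_subset_Icc hx.1 hc.2))) fun t ht => ?_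
    have ht_mem : t ∈ Ico a b := ⟨hx.1.trans ht.1.le, ht.2.trans_le hc.2⟩
    have ht_pos : 0 < f' t := by
      by_contra! h
      exact (csInf_le hTbdd (mem_insert_of_mem _ ⟨ht_mem, h⟩)).not_gt ht.2
    exact (slope_nonneg_iff_of_lt ht.1).1 <| ht_pos.le.trans <|
      hconc.le_slope_of_hasDerivWithinAt_Ioi_of_lt hx hc ht.1 ht.2 (hf' t ht_mem)
  · exact le_rfl
  · refine continuousWithinAt_const.closure_le (closure_Ioo hcx.ne ▸ left_mem_Icc.2 hcx.le)
      ((hcont c hc).mono (Ioo_subset_Icc_self.trans (Icc_subset_Icc hc.1 hx.2))) fun t ht => ?_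
    obtain ⟨y, hyT, hyt⟩ := exists_lt_of_csInf_lt (insert_nonempty _ _) ht.1
    obtain ⟨hy_mem, hy_nonpos⟩ : y ∈ Ico a b ∧ f' y ≤ 0 := by
      rcases hyT with rfl | hy
      · exact absurd (hyt.trans ht.2) hx.2.not_gt
      · exact hy
    have ht_mem : t ∈ Ico a b := ⟨hy_mem.1.trans hyt.le, ht.2.trans_le hx.2⟩
    have ht_nonpos : f' t ≤ 0 :=
      (hconc.le_of_hasDerivWithinAt_Ioi (Ico_subset_Icc_self hy_mem) hx hyt ht.2 (hf' y hy_mem)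
        (hf' t ht_mem)).trans hy_nonpos
    exact (slope_nonpos_iff_of_lt ht.2).1 <|
      (hconc.slope_le_of_hasDerivWithinAt_Ioi (Ico_subset_Icc_self ht_mem) hx ht.2
        (hf' t ht_mem)).trans ht_nonpos

theorem stmt6_general (Qb k Qt : ℝ) (hQt : Qt ∈ Set.Icc (-Qb) Qb)
    (g : ℝ → ℝ) (hcont : ContinuousOn g (Set.Icc (-Qb) Qb))
    (hconc : ConcaveOn ℝ (Set.Icc (-Qb) Qb) g)
    (gp : ℝ → ℝ)
    (hgp : ∀ R ∈ Set.Ico (-Qb) Qb,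
      Filter.Tendsto (fun h => (g (R + h) - g R) / h) (nhdsWithin 0 (Set.Ioi 0))
        (nhds (gp R)))
    (φ : ℝ → ℝ) (hφ : ∀ q, φ q = k * q + g (Qt - q))
    (Qstar : ℝ)
    (hQstar : Qstar = sInf (insert Qb {R | R ∈ Set.Ico (-Qb) Qb ∧ gp R ≤ k})) :
    ContinuousOn φ (Set.Icc (Qt - Qb) (Qt + Qb)) ∧
    ConcaveOn ℝ (Set.Icc (Qt - Qb) (Qt + Qb)) φ ∧
    (∀ q ∈ Set.Ioc (Qt - Qb) (Qt + Qb),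
      Filter.Tendsto (fun h => (φ (q + h) - φ q) / h) (nhdsWithin 0 (Set.Iio 0))
        (nhds (k - gp (Qt - q)))) ∧
    IsMaxOn φ (Set.Icc 0 (Qt + Qb)) (Qt - Qstar) := by
  obtain rfl : φ = fun q => k * q + g (Qt - q) := funext hφ
  have hgp' : ∀ R ∈ Ico (-Qb) Qb, HasDerivWithinAt g (gp R) (Ioi R) R := fun R hR =>
    hasDerivWithinAt_Ioi_iff_tendsto_slope_zero_right.2 (hgp R hR)
  have hmaps : MapsTo (Qt - ·) (Icc (Qt - Qb) (Qt + Qb)) (Icc (-Qb) Qb) := fun q hq =>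
    ⟨by linarith [hq.2], by linarith [hq.1]⟩
  refine ⟨?_, ?_, fun q hq => ?_, ?_⟩
  · exact (continuousOn_const.mul continuousOn_id).add (hcont.comp (by fun_prop) hmaps)
  · exact ((LinearMap.mul ℝ ℝ k).concaveOn (convex_Icc _ _)).add
      ((hconc.comp_affineMap (AffineMap.const ℝ ℝ Qt - AffineMap.id ℝ ℝ)).subset hmaps
        (convex_Icc _ _))
  · have hR : Qt - q ∈ Ico (-Qb) Qb := ⟨by linarith [hq.2], by linarith [hq.1]⟩
    have hg_left := (hgp' _ hR).comp q ((hasDerivAt_id q).const_sub Qt).hasDerivWithinAt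
      fun h (hh : h < q) => show Qt - q < Qt - h by linarith
    exact (hasDerivWithinAt_Iio_iff_tendsto_slope_zero_left (f := fun q => k * q + g (Qt - q))).1
      ((((hasDerivAt_id q).const_mul k).hasDerivWithinAt.add hg_left).congr_deriv (by ring))
  · have hf := hconc.sub ((LinearMap.mul ℝ ℝ k).convexOn (convex_Icc _ _))
    have hmax := hf.isMaxOn_sInf_rightDeriv_nonpos (hcont.sub (by fun_prop)) fun R hR =>
        (hgp' R hR).sub ((hasDerivAt_id R).const_mul k).hasDerivWithinAt
    simp_rw [mul_one, sub_nonpos, ← hQstar] at hmax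
    refine isMaxOn_iff.2 fun q hq => ?_
    have := isMaxOn_iff.1 hmax (Qt - q) ⟨by linarith [hq.2], by linarith [hq.1, hQt.2]⟩
    simp only [Pi.sub_apply, LinearMap.mul_apply', sub_sub_cancel] at this ⊢
    linarith

/-- Let `g` be continuous and concave on `[-Q̄, Q̄]` with right derivative `g'₊ = gp`,
`k ∈ ℝ`, `Q̃ ∈ [-Q̄, Q̄]`, and `φ(q) = k q + g(Q̃ - q)`.  Then `φ` is continuous and
concave on `[Q̃ - Q̄, Q̃ + Q̄]`, its left derivative satisfies
`φ'₋(q) = k - g'₊(Q̃ - q)`, and with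
`Q* = min(inf {R ∈ [-Q̄, Q̄) : g'₊(R) ≤ k}, Q̄)` (inf ∅ = +∞ convention, realized by
taking the infimum of the set with `Q̄` inserted), the point `Q̃ - Q*` maximizes `φ`
over `[0, Q̃ + Q̄]`. -/
theorem stmt6 (Qb k Qt : ℝ) (hQb : 0 < Qb) (hQt : Qt ∈ Set.Icc (-Qb) Qb)
    (g : ℝ → ℝ) (hcont : ContinuousOn g (Set.Icc (-Qb) Qb))
    (hconc : ConcaveOn ℝ (Set.Icc (-Qb) Qb) g)
    (gp : ℝ → ℝ)
    (hgp : ∀ R ∈ Set.Ico (-Qb) Qb,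
      Filter.Tendsto (fun h => (g (R + h) - g R) / h) (nhdsWithin 0 (Set.Ioi 0))
        (nhds (gp R)))
    (φ : ℝ → ℝ) (hφ : ∀ q, φ q = k * q + g (Qt - q))
    (Qstar : ℝ)
    (hQstar : Qstar = sInf (insert Qb {R | R ∈ Set.Ico (-Qb) Qb ∧ gp R ≤ k})) :
    ContinuousOn φ (Set.Icc (Qt - Qb) (Qt + Qb)) ∧
    ConcaveOn ℝ (Set.Icc (Qt - Qb) (Qt + Qb)) φ ∧
    (∀ q ∈ Set.Ioc (Qt - Qb) (Qt + Qb),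
      Filter.Tendsto (fun h => (φ (q + h) - φ q) / h) (nhdsWithin 0 (Set.Iio 0))
        (nhds (k - gp (Qt - q)))) ∧
    IsMaxOn φ (Set.Icc 0 (Qt + Qb)) (Qt - Qstar) :=
  stmt6_general Qb k Qt hQt g hcont hconc gp hgp φ hφ Qstar hQstar
end

section
/- Let T > 0, a < b, a₀, b₀ ∈ (a, b), and ρ₁, ρ₂ ∈ (0, 1). Let α, β, γ be bounded continuous functions on [0,T] × [a,b] with α ≥ 0 and γ < 0. Suppose u ∈ C([0,T] × [a,b]) ∩ C^{1,2}([0,T) × (a,b)) satisfies: ∂_t u + α ∂²_{yy} u + β ∂_y u + γ u = 0 on [0,T) × (a,b); u(T, y) = 0 for y ∈ [a,b]; u(t, a) = ρ₁ u(t, a₀) and u(t, b) = ρ₂ u(t, b₀) for t ∈ [0,T]. Then u ≡ 0. -/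
/-- One-sided maximum principle: under the hypotheses, `u ≤ 0` on the closed domain. -/
lemma stmt13_key (T a b a0 b0 ρ1 ρ2 : ℝ) (hT : 0 < T) (hab : a < b)
    (ha0 : a0 ∈ Set.Ioo a b) (hb0 : b0 ∈ Set.Ioo a b)
    (hρ1 : ρ1 ∈ Set.Ioo (0:ℝ) 1) (hρ2 : ρ2 ∈ Set.Ioo (0:ℝ) 1)
    (α β γ : ℝ → ℝ → ℝ)
    (hαpos : ∀ t ∈ Set.Icc 0 T, ∀ z ∈ Set.Icc a b, 0 ≤ α t z)
    (hγneg : ∀ t ∈ Set.Icc 0 T, ∀ z ∈ Set.Icc a b, γ t z < 0)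
    (u ut uy uyy : ℝ → ℝ → ℝ)
    (hu : ContinuousOn (fun p : ℝ × ℝ => u p.1 p.2) (Set.Icc 0 T ×ˢ Set.Icc a b))
    (hut : ∀ t ∈ Set.Ico 0 T, ∀ z ∈ Set.Ioo a b,
      HasDerivWithinAt (fun s => u s z) (ut t z) (Set.Icc 0 T) t)
    (huy : ∀ t ∈ Set.Ico 0 T, ∀ z ∈ Set.Ioo a b,
      HasDerivAt (fun x => u t x) (uy t z) z)
    (huyy : ∀ t ∈ Set.Ico 0 T, ∀ z ∈ Set.Ioo a b,
      HasDerivAt (fun x => uy t x) (uyy t z) z)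
    (hPDE : ∀ t ∈ Set.Ico 0 T, ∀ z ∈ Set.Ioo a b,
      ut t z + α t z * uyy t z + β t z * uy t z + γ t z * u t z = 0)
    (hterm : ∀ z ∈ Set.Icc a b, u T z = 0)
    (hba : ∀ t ∈ Set.Icc (0:ℝ) T, u t a = ρ1 * u t a0)
    (hbb : ∀ t ∈ Set.Icc (0:ℝ) T, u t b = ρ2 * u t b0) :
    ∀ t ∈ Set.Icc (0:ℝ) T, ∀ z ∈ Set.Icc a b, u t z ≤ 0 := by
  set K : Set (ℝ × ℝ) := Set.Icc 0 T ×ˢ Set.Icc a b with hK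
  have hKc : IsCompact K := isCompact_Icc.prod isCompact_Icc
  have hKne : K.Nonempty := ⟨(0, a), ⟨⟨le_refl _, hT.le⟩, ⟨le_refl _, hab.le⟩⟩⟩
  obtain ⟨⟨t0, y0⟩, hpK, hmax⟩ := hKc.exists_isMaxOn hKne hu
  obtain ⟨ht0, hy0⟩ := hpK
  set M := u t0 y0 with hMdef
  suffices hM : M ≤ 0 by
    intro t ht z hz
    exact le_trans (hmax (⟨ht, hz⟩ : (t, z) ∈ K)) hM
  by_contra hMc
  push_neg at hMc
  -- t0 < T
  have htT : t0 < T := by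
    rcases lt_or_eq_of_le ht0.2 with h | h
    · exact h
    · exfalso; have := hterm y0 hy0; rw [← h] at this; rw [hMdef] at hMc; linarith
  -- y0 ≠ a
  have hya : a < y0 := by
    rcases lt_or_eq_of_le hy0.1 with h | h
    · exact h
    · exfalso
      have h1 : u t0 a0 ≤ M := hmax (⟨ht0, ⟨ha0.1.le, ha0.2.le⟩⟩ : (t0, a0) ∈ K)
      have h2 : u t0 a = ρ1 * u t0 a0 := hba t0 ht0
      have h' : y0 = a := by simpa using h.symm
      have h3 : M = u t0 a := by rw [hMdef, h']
      nlinarith [hρ1.1, hρ1.2]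
  have hyb : y0 < b := by
    rcases lt_or_eq_of_le hy0.2 with h | h
    · exact h
    · exfalso
      have h1 : u t0 b0 ≤ M := hmax (⟨ht0, ⟨hb0.1.le, hb0.2.le⟩⟩ : (t0, b0) ∈ K)
      have h2 : u t0 b = ρ2 * u t0 b0 := hbb t0 ht0
      have h' : y0 = b := by simpa using h
      have h3 : M = u t0 b := by rw [hMdef, h']
      nlinarith [hρ2.1, hρ2.2]
  have ht0' : t0 ∈ Set.Ico 0 T := ⟨ht0.1, htT⟩
  have hy0' : y0 ∈ Set.Ioo a b := ⟨hya, hyb⟩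
  -- first spatial derivative vanishes
  have hderivy := huy t0 ht0' y0 hy0'
  have hlocmax : IsLocalMax (fun x => u t0 x) y0 := by
    have hnb : Set.Ioo a b ∈ nhds y0 := isOpen_Ioo.mem_nhds hy0'
    filter_upwards [hnb] with x hx
    exact hmax (⟨ht0, ⟨hx.1.le, hx.2.le⟩⟩ : (t0, x) ∈ K)
  have huy0 : uy t0 y0 = 0 := hlocmax.hasDerivAt_eq_zero hderivy
  -- time derivative nonpositive
  have hut0 : ut t0 y0 ≤ 0 := by
    have hsub : Set.Ioc t0 T ⊆ Set.Icc 0 T := fun s hs => ⟨le_trans ht0.1 hs.1.le, hs.2⟩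
    have hd := ((hut t0 ht0' y0 hy0').mono hsub)
    rw [hasDerivWithinAt_iff_tendsto_slope] at hd
    have hne : (nhdsWithin t0 (Set.Ioc t0 T \ {t0})).NeBot := by
      rw [Set.diff_singleton_eq_self (by simp)]
      rw [← mem_closure_iff_nhdsWithin_neBot, closure_Ioc htT.ne]
      exact ⟨le_refl _, htT.le⟩
    refine le_of_tendsto hd ?_
    filter_upwards [self_mem_nhdsWithin] with s hs
    obtain ⟨hs1, _⟩ := hs
    have h1 : u s y0 ≤ M := hmax (⟨⟨le_trans ht0.1 hs1.1.le, hs1.2⟩, hy0⟩ : (s, y0) ∈ K)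
    rw [slope_def_field]
    apply div_nonpos_of_nonpos_of_nonneg
    · rw [← hMdef]; linarith
    · linarith [hs1.1]
  -- second spatial derivative nonpositive
  have huyy0 : uyy t0 y0 ≤ 0 := by
    by_contra h
    push_neg at h
    have hd := huyy t0 ht0' y0 hy0'
    rw [hasDerivAt_iff_tendsto_slope] at hd
    have hev : ∀ᶠ x in nhdsWithin y0 {y0}ᶜ, 0 < slope (fun x => uy t0 x) y0 x :=
      hd.eventually (eventually_gt_nhds h)
    have hev' : ∀ᶠ x in nhdsWithin y0 (Set.Ioi y0), 0 < uy t0 x := by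
      have hmono' : nhdsWithin y0 (Set.Ioi y0) ≤ nhdsWithin y0 {y0}ᶜ :=
        nhdsWithin_mono _ (fun x hx => ne_of_gt hx)
      filter_upwards [hev.filter_mono hmono', self_mem_nhdsWithin] with x hx hx'
      rw [slope_def_field, huy0, sub_zero] at hx
      have hxy : (0:ℝ) < x - y0 := by simp only [Set.mem_Ioi] at hx'; linarith
      calc (0:ℝ) < uy t0 x / (x - y0) * (x - y0) := by positivity
        _ = uy t0 x := by field_simp
    have hev'' : ∀ᶠ x in nhdsWithin y0 (Set.Ioi y0), 0 < uy t0 x ∧ x < b := by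
      have hb' : ∀ᶠ x in nhdsWithin y0 (Set.Ioi y0), x < b := by
        have : Set.Ioo y0 b ∈ nhdsWithin y0 (Set.Ioi y0) :=
          Ioo_mem_nhdsGT_of_mem ⟨le_refl _, hyb⟩
        filter_upwards [this] with x hx using hx.2
      exact hev'.and hb'
    rw [Filter.eventually_iff, mem_nhdsGT_iff_exists_Ioc_subset] at hev''
    obtain ⟨c, hc, hsubc⟩ := hev''
    simp only [Set.mem_Ioi] at hc
    have hcb : c < b := (hsubc ⟨hc, le_refl _⟩).2
    have hIcc : Set.Icc y0 c ⊆ Set.Ioo a b := fun x hx => ⟨lt_of_lt_of_le hya hx.1, lt_of_le_of_lt hx.2 hcb⟩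
    have hmono : StrictMonoOn (fun x => u t0 x) (Set.Icc y0 c) := by
      apply strictMonoOn_of_deriv_pos (convex_Icc _ _)
      · intro x hx
        exact ((huy t0 ht0' x (hIcc hx)).continuousAt).continuousWithinAt
      · intro x hx
        rw [interior_Icc] at hx
        rw [(huy t0 ht0' x (hIcc ⟨hx.1.le, hx.2.le⟩)).deriv]
        exact (hsubc ⟨hx.1, hx.2.le⟩).1
    have h1 : u t0 y0 < u t0 c :=
      hmono ⟨le_refl _, hc.le⟩ ⟨hc.le, le_refl _⟩ hc
    have h2 : u t0 c ≤ M :=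
      hmax (⟨ht0, ⟨(lt_of_lt_of_le hya hc.le).le, hcb.le⟩⟩ : (t0, c) ∈ K)
    rw [← hMdef] at h1
    linarith
  -- conclude from the PDE
  have hPDE0 := hPDE t0 ht0' y0 hy0'
  have hα0 := hαpos t0 ht0 y0 hy0
  have hγ0 := hγneg t0 ht0 y0 hy0
  rw [huy0, mul_zero] at hPDE0
  have h1 : α t0 y0 * uyy t0 y0 ≤ 0 := mul_nonpos_of_nonneg_of_nonpos hα0 huyy0
  have h2 : γ t0 y0 * u t0 y0 < 0 := mul_neg_of_neg_of_pos hγ0 hMc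
  rw [← hMdef] at hPDE0
  linarith

/-- Maximum-principle uniqueness for the linear parabolic PDE with nonlocal boundary
conditions, zero data, multipliers `ρ₁, ρ₂ ∈ (0,1)` and zeroth order coefficient
`γ < 0`: any `C([0,T]×[a,b]) ∩ C^{1,2}([0,T)×(a,b))` solution vanishes identically. -/
theorem stmt13 (T a b a0 b0 ρ1 ρ2 : ℝ) (hT : 0 < T) (hab : a < b)
    (ha0 : a0 ∈ Set.Ioo a b) (hb0 : b0 ∈ Set.Ioo a b)
    (hρ1 : ρ1 ∈ Set.Ioo (0:ℝ) 1) (hρ2 : ρ2 ∈ Set.Ioo (0:ℝ) 1)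
    (α β γ : ℝ → ℝ → ℝ)
    (hα : ContinuousOn (fun p : ℝ × ℝ => α p.1 p.2) (Set.Icc 0 T ×ˢ Set.Icc a b))
    (hβ : ContinuousOn (fun p : ℝ × ℝ => β p.1 p.2) (Set.Icc 0 T ×ˢ Set.Icc a b))
    (hγ : ContinuousOn (fun p : ℝ × ℝ => γ p.1 p.2) (Set.Icc 0 T ×ˢ Set.Icc a b))
    (hαpos : ∀ t ∈ Set.Icc 0 T, ∀ z ∈ Set.Icc a b, 0 ≤ α t z)
    (hγneg : ∀ t ∈ Set.Icc 0 T, ∀ z ∈ Set.Icc a b, γ t z < 0)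
    (u ut uy uyy : ℝ → ℝ → ℝ)
    (hu : ContinuousOn (fun p : ℝ × ℝ => u p.1 p.2) (Set.Icc 0 T ×ˢ Set.Icc a b))
    (hut : ∀ t ∈ Set.Ico 0 T, ∀ z ∈ Set.Ioo a b,
      HasDerivWithinAt (fun s => u s z) (ut t z) (Set.Icc 0 T) t)
    (huy : ∀ t ∈ Set.Ico 0 T, ∀ z ∈ Set.Ioo a b,
      HasDerivAt (fun x => u t x) (uy t z) z)
    (huyy : ∀ t ∈ Set.Ico 0 T, ∀ z ∈ Set.Ioo a b,
      HasDerivAt (fun x => uy t x) (uyy t z) z)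
    (hPDE : ∀ t ∈ Set.Ico 0 T, ∀ z ∈ Set.Ioo a b,
      ut t z + α t z * uyy t z + β t z * uy t z + γ t z * u t z = 0)
    (hterm : ∀ z ∈ Set.Icc a b, u T z = 0)
    (hba : ∀ t ∈ Set.Icc (0:ℝ) T, u t a = ρ1 * u t a0)
    (hbb : ∀ t ∈ Set.Icc (0:ℝ) T, u t b = ρ2 * u t b0) :
    ∀ t ∈ Set.Icc (0:ℝ) T, ∀ z ∈ Set.Icc a b, u t z = 0 := by
  have h1 := stmt13_key T a b a0 b0 ρ1 ρ2 hT hab ha0 hb0 hρ1 hρ2 α β γ hαpos hγneg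
    u ut uy uyy hu hut huy huyy hPDE hterm hba hbb
  have h2 := stmt13_key T a b a0 b0 ρ1 ρ2 hT hab ha0 hb0 hρ1 hρ2 α β γ hαpos hγneg
    (fun t z => -u t z) (fun t z => -ut t z) (fun t z => -uy t z) (fun t z => -uyy t z)
    hu.neg
    (fun t ht z hz => (hut t ht z hz).neg)
    (fun t ht z hz => (huy t ht z hz).neg)
    (fun t ht z hz => (huyy t ht z hz).neg)
    (fun t ht z hz => by have := hPDE t ht z hz; ring_nf; ring_nf at this; linarith)
    (fun z hz => by simp [hterm z hz])
    (fun t ht => by simp only [hba t ht]; ring)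
    (fun t ht => by simp only [hbb t ht]; ring)
  intro t ht z hz
  have ha := h1 t ht z hz
  have hb := h2 t ht z hz
  linarith
end

section
/- Let T > 0, a < b, a₀, b₀ ∈ (a, b), and ρ₁, ρ₂ ∈ (0, ∞). Let α, β, γ be bounded continuous functions on [0,T] × [a,b] with α ≥ 0. Suppose u ∈ C([0,T] × [a,b]) ∩ C^{1,2}([0,T) × (a,b)) solves ∂_t u + α ∂²_{yy} u + β ∂_y u + γ u = 0 on [0,T) × (a,b) with u(T,·) = 0, u(t,a) = ρ₁ u(t,a₀), u(t,b) = ρ₂ u(t,b₀). Then u ≡ 0. -/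
open Set Filter Topology
set_option linter.all false
lemma core_maxprin (T a b a0 b0 r1 r2 : ℝ) (hT : 0 < T) (hab : a < b)
    (ha0 : a0 ∈ Set.Ioo a b) (hb0 : b0 ∈ Set.Ioo a b)
    (hr10 : 0 < r1) (hr11 : r1 < 1) (hr20 : 0 < r2) (hr21 : r2 < 1)
    (α B G : ℝ → ℝ → ℝ)
    (hαpos : ∀ t ∈ Set.Ico 0 T, ∀ z ∈ Set.Ioo a b, 0 ≤ α t z)
    (hG : ∀ t ∈ Set.Ico 0 T, ∀ z ∈ Set.Ioo a b, G t z < 0)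
    (v vt vy vyy : ℝ → ℝ → ℝ)
    (hv : ContinuousOn (fun p : ℝ × ℝ => v p.1 p.2) (Set.Icc 0 T ×ˢ Set.Icc a b))
    (hvt : ∀ t ∈ Set.Ico 0 T, ∀ z ∈ Set.Ioo a b,
      HasDerivWithinAt (fun s => v s z) (vt t z) (Set.Icc 0 T) t)
    (hvy : ∀ t ∈ Set.Ico 0 T, ∀ z ∈ Set.Ioo a b,
      HasDerivAt (fun x => v t x) (vy t z) z)
    (hvyy : ∀ t ∈ Set.Ico 0 T, ∀ z ∈ Set.Ioo a b,
      HasDerivAt (fun x => vy t x) (vyy t z) z)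
    (hPDE : ∀ t ∈ Set.Ico 0 T, ∀ z ∈ Set.Ioo a b,
      vt t z + α t z * vyy t z + B t z * vy t z + G t z * v t z = 0)
    (hterm : ∀ z ∈ Set.Icc a b, v T z = 0)
    (hba : ∀ t ∈ Set.Icc (0:ℝ) T, v t a = r1 * v t a0)
    (hbb : ∀ t ∈ Set.Icc (0:ℝ) T, v t b = r2 * v t b0) :
    ∀ t ∈ Set.Icc (0:ℝ) T, ∀ z ∈ Set.Icc a b, v t z ≤ 0 := by
  set K := Set.Icc (0:ℝ) T ×ˢ Set.Icc a b with hK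
  have hKc : IsCompact K := isCompact_Icc.prod isCompact_Icc
  have hKne : K.Nonempty := ⟨(0, a), ⟨⟨le_refl 0, hT.le⟩, ⟨le_refl a, hab.le⟩⟩⟩
  obtain ⟨p, hpK, hmax⟩ := hKc.exists_isMaxOn hKne hv
  set M := v p.1 p.2 with hMdef
  by_contra hcon
  push_neg at hcon
  obtain ⟨t0, ht0, z0, hz0, hpos⟩ := hcon
  have hM : 0 < M := lt_of_lt_of_le hpos (hmax (show ((t0, z0) : ℝ × ℝ) ∈ K from ⟨ht0, hz0⟩))
  have hpt : p.1 ∈ Set.Icc (0:ℝ) T := hpK.1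
  have hpz : p.2 ∈ Set.Icc a b := hpK.2
  have hle : ∀ s ∈ Set.Icc (0:ℝ) T, ∀ x ∈ Set.Icc a b, v s x ≤ M :=
    fun s hs x hx => hmax (show ((s, x) : ℝ × ℝ) ∈ K from ⟨hs, hx⟩)
  have hpa : p.2 ≠ a := by
    intro h
    have h1 : M = r1 * v p.1 a0 := by rw [hMdef, h]; exact hba p.1 hpt
    have h2 : v p.1 a0 ≤ M := hle p.1 hpt a0 ⟨ha0.1.le, ha0.2.le⟩
    nlinarith
  have hpb : p.2 ≠ b := by
    intro h
    have h1 : M = r2 * v p.1 b0 := by rw [hMdef, h]; exact hbb p.1 hpt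
    have h2 : v p.1 b0 ≤ M := hle p.1 hpt b0 ⟨hb0.1.le, hb0.2.le⟩
    nlinarith
  have hzin : p.2 ∈ Set.Ioo a b :=
    ⟨lt_of_le_of_ne hpz.1 (Ne.symm hpa), lt_of_le_of_ne hpz.2 hpb⟩
  have hpT : p.1 ≠ T := by
    intro h
    have h2 := hterm p.2 hpz
    rw [hMdef, h, h2] at hM
    exact lt_irrefl 0 hM
  have htin : p.1 ∈ Set.Ico (0:ℝ) T := ⟨hpt.1, lt_of_le_of_ne hpt.2 hpT⟩
  -- first derivative in y vanishes
  have hlocmax : IsLocalMax (fun x => v p.1 x) p.2 := by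
    filter_upwards [isOpen_Ioo.mem_nhds hzin] with x hx
    exact hle p.1 hpt x ⟨hx.1.le, hx.2.le⟩
  have hvy0 : vy p.1 p.2 = 0 := hlocmax.hasDerivAt_eq_zero (hvy p.1 htin p.2 hzin)
  -- time derivative nonpositive
  have hvt0 : vt p.1 p.2 ≤ 0 := by
    have hd : HasDerivWithinAt (fun s => v s p.2) (vt p.1 p.2) (Set.Ioc p.1 T) p.1 :=
      (hvt p.1 htin p.2 hzin).mono (fun x hx => ⟨hpt.1.trans hx.1.le, hx.2⟩)
    rw [hasDerivWithinAt_iff_tendsto_slope] at hd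
    have hseq : Set.Ioc p.1 T \ {p.1} = Set.Ioc p.1 T := by
      rw [Set.diff_singleton_eq_self]
      exact fun h => lt_irrefl p.1 h.1
    rw [hseq] at hd
    have : Filter.NeBot (nhdsWithin p.1 (Set.Ioc p.1 T)) := left_nhdsWithin_Ioc_neBot htin.2
    refine le_of_tendsto hd ?_
    filter_upwards [self_mem_nhdsWithin] with x hx
    have h1 : v x p.2 ≤ M := hle x ⟨hpt.1.trans hx.1.le, hx.2⟩ p.2 hpz
    have h2 : (0:ℝ) < x - p.1 := sub_pos.mpr hx.1
    rw [slope_def_field]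
    exact div_nonpos_of_nonpos_of_nonneg (by rw [← hMdef]; linarith) h2.le
  -- second derivative in y nonpositive
  have hvyy0 : vyy p.1 p.2 ≤ 0 := by
    by_contra hcon2
    push_neg at hcon2
    have hd2 := hvyy p.1 htin p.2 hzin
    rw [hasDerivAt_iff_tendsto_slope] at hd2
    have hd2' : Filter.Tendsto (slope (fun x => vy p.1 x) p.2) (nhdsWithin p.2 (Set.Ioi p.2))
        (nhds (vyy p.1 p.2)) :=
      hd2.mono_left (nhdsWithin_mono _ (fun x hx => ne_of_gt hx))
    have hev : ∀ᶠ x in nhdsWithin p.2 (Set.Ioi p.2),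
        0 < slope (fun x => vy p.1 x) p.2 x ∧ x ∈ Set.Ioo a b := by
      refine (hd2'.eventually (eventually_gt_nhds hcon2)).and ?_
      exact eventually_nhdsWithin_of_eventually_nhds (isOpen_Ioo.eventually_mem hzin)
    rw [eventually_iff, mem_nhdsGT_iff_exists_Ioo_subset] at hev
    obtain ⟨c, hc, hsub⟩ := hev
    set d := (p.2 + c) / 2 with hd
    have hdc : d < c := by rw [hd]; simp at hc; linarith
    have hpd : p.2 < d := by rw [hd]; simp at hc; linarith
    have hdio : d ∈ Set.Ioo a b := (hsub ⟨hpd, hdc⟩).2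
    have hDsub : Set.Icc p.2 d ⊆ Set.Ioo a b :=
      fun x hx => ⟨lt_of_lt_of_le hzin.1 hx.1, lt_of_le_of_lt hx.2 hdio.2⟩
    have hint : interior (Set.Icc p.2 d) = Set.Ioo p.2 d := interior_Icc
    have hmono : StrictMonoOn (fun x => v p.1 x) (Set.Icc p.2 d) := by
      refine strictMonoOn_of_hasDerivWithinAt_pos (f' := fun x => vy p.1 x) (convex_Icc _ _) ?_ ?_ ?_
      · intro x hx
        exact (hvy p.1 htin x (hDsub hx)).continuousAt.continuousWithinAt
      · intro x hx
        rw [hint] at hx ⊢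
        exact (hvy p.1 htin x (hDsub (Set.Ioo_subset_Icc_self hx))).hasDerivWithinAt
      · intro x hx
        rw [hint] at hx
        have hx' : x ∈ Set.Ioo p.2 c := ⟨hx.1, hx.2.trans hdc⟩
        have hsl := (hsub hx').1
        rw [slope_def_field, hvy0, sub_zero] at hsl
        have hden : (0:ℝ) < x - p.2 := sub_pos.mpr hx.1
        rcases div_pos_iff.mp hsl with ⟨h1, _⟩ | ⟨_, h2⟩
        · exact h1
        · linarith
    have hlt : M < v p.1 d :=
      hMdef ▸ hmono (Set.left_mem_Icc.mpr hpd.le) (Set.right_mem_Icc.mpr hpd.le) hpd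
    have : v p.1 d ≤ M := hle p.1 hpt d ⟨hdio.1.le, hdio.2.le⟩
    linarith
  have h0 := hPDE p.1 htin p.2 hzin
  have hα0 := hαpos p.1 htin p.2 hzin
  have hG0 := hG p.1 htin p.2 hzin
  rw [hvy0, mul_zero, add_zero] at h0
  nlinarith [mul_nonneg hα0 (neg_nonneg.mpr hvyy0), mul_neg_of_neg_of_pos hG0 hM]

set_option linter.all false in
set_option maxHeartbeats 2000000 in
/-- Maximum-principle uniqueness for the linear parabolic PDE with nonlocal boundary
conditions, zero data, arbitrary multipliers `ρ₁, ρ₂ ∈ (0,∞)` and arbitrary bounded continuous zeroth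
order coefficient `γ`: any `C([0,T]×[a,b]) ∩ C^{1,2}([0,T)×(a,b))` solution vanishes identically. -/
theorem stmt14 (T a b a0 b0 ρ1 ρ2 : ℝ) (hT : 0 < T) (hab : a < b)
    (ha0 : a0 ∈ Set.Ioo a b) (hb0 : b0 ∈ Set.Ioo a b)
    (hρ1 : 0 < ρ1) (hρ2 : 0 < ρ2)
    (α β γ : ℝ → ℝ → ℝ)
    (hα : ContinuousOn (fun p : ℝ × ℝ => α p.1 p.2) (Set.Icc 0 T ×ˢ Set.Icc a b))
    (hβ : ContinuousOn (fun p : ℝ × ℝ => β p.1 p.2) (Set.Icc 0 T ×ˢ Set.Icc a b))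
    (hγ : ContinuousOn (fun p : ℝ × ℝ => γ p.1 p.2) (Set.Icc 0 T ×ˢ Set.Icc a b))
    (hαpos : ∀ t ∈ Set.Icc 0 T, ∀ z ∈ Set.Icc a b, 0 ≤ α t z)
    (u ut uy uyy : ℝ → ℝ → ℝ)
    (hu : ContinuousOn (fun p : ℝ × ℝ => u p.1 p.2) (Set.Icc 0 T ×ˢ Set.Icc a b))
    (hut : ∀ t ∈ Set.Ico 0 T, ∀ z ∈ Set.Ioo a b,
      HasDerivWithinAt (fun s => u s z) (ut t z) (Set.Icc 0 T) t)
    (huy : ∀ t ∈ Set.Ico 0 T, ∀ z ∈ Set.Ioo a b,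
      HasDerivAt (fun x => u t x) (uy t z) z)
    (huyy : ∀ t ∈ Set.Ico 0 T, ∀ z ∈ Set.Ioo a b,
      HasDerivAt (fun x => uy t x) (uyy t z) z)
    (hPDE : ∀ t ∈ Set.Ico 0 T, ∀ z ∈ Set.Ioo a b,
      ut t z + α t z * uyy t z + β t z * uy t z + γ t z * u t z = 0)
    (hterm : ∀ z ∈ Set.Icc a b, u T z = 0)
    (hba : ∀ t ∈ Set.Icc (0:ℝ) T, u t a = ρ1 * u t a0)
    (hbb : ∀ t ∈ Set.Icc (0:ℝ) T, u t b = ρ2 * u t b0) :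
    ∀ t ∈ Set.Icc (0:ℝ) T, ∀ z ∈ Set.Icc a b, u t z = 0 := by
  obtain ⟨ha0a, ha0b⟩ := ha0
  obtain ⟨hb0a, hb0b⟩ := hb0
  -- the spatial weight
  set N : ℝ := max (ρ1 / ((a0 - a) * (b - a0))) (ρ2 / ((b0 - a) * (b - b0))) with hNdef
  have hq1 : (0:ℝ) < (a0 - a) * (b - a0) := mul_pos (by linarith) (by linarith)
  have hq2 : (0:ℝ) < (b0 - a) * (b - b0) := mul_pos (by linarith) (by linarith)
  have hNpos : 0 < N := lt_max_of_lt_left (div_pos hρ1 hq1)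
  set ψ : ℝ → ℝ := fun y => 1 + N * ((y - a) * (b - y)) with hψdef
  set ψ' : ℝ → ℝ := fun y => N * (a + b - 2 * y) with hψ'def
  have hψpos : ∀ y ∈ Set.Icc a b, 0 < ψ y := by
    intro y hy
    have h1 : 0 ≤ (y - a) * (b - y) := mul_nonneg (by linarith [hy.1]) (by linarith [hy.2])
    have := mul_nonneg hNpos.le h1
    simp only [hψdef]; linarith
  have hψd : ∀ y : ℝ, HasDerivAt ψ (ψ' y) y := by
    intro y
    have h1 : HasDerivAt (fun x : ℝ => (x - a) * (b - x)) (1 * (b - y) + (y - a) * (-1)) y := by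
      have := ((hasDerivAt_id y).sub_const a).mul ((hasDerivAt_const y b).sub (hasDerivAt_id y))
      exact this.congr_deriv (by simp only [Pi.sub_apply, id_eq]; ring)
    have h2 := (h1.const_mul N).const_add 1
    refine h2.congr_deriv ?_
    simp only [hψ'def]; ring
  have hψ'd : ∀ y : ℝ, HasDerivAt ψ' (-2 * N) y := by
    intro y
    have h1 : HasDerivAt (fun x : ℝ => a + b - 2 * x) (-2 : ℝ) y := by
      have := (hasDerivAt_const y (a + b)).sub ((hasDerivAt_id y).const_mul 2)
      exact this.congr_deriv (by ring)
    have h2 := h1.const_mul N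
    refine h2.congr_deriv ?_
    ring
  have hψcont : Continuous ψ := by
    exact continuous_const.add (continuous_const.mul (((continuous_id.sub continuous_const)).mul (continuous_const.sub continuous_id)))
  have hψ'cont : Continuous ψ' := by
    exact continuous_const.mul (continuous_const.sub (continuous_const.mul continuous_id))
  set K := Set.Icc (0:ℝ) T ×ˢ Set.Icc a b with hKdef
  have hψne : ∀ p : ℝ × ℝ, p ∈ K → ψ p.2 ≠ 0 := fun p hp => (hψpos p.2 hp.2).ne'
  -- continuity of the auxiliary zeroth order coefficient
  set g : ℝ → ℝ → ℝ := fun t y =>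
    γ t y + 2 * N * α t y / ψ y - (β t y - 2 * α t y * ψ' y / ψ y) * (ψ' y / ψ y) with hgdef
  have hgcont : ContinuousOn (fun p : ℝ × ℝ => g p.1 p.2) K := by
    apply ContinuousOn.sub
    · apply ContinuousOn.add hγ
      exact ((continuousOn_const.mul hα).div ((hψcont.comp continuous_snd).continuousOn) hψne)
    · apply ContinuousOn.mul
      · apply ContinuousOn.sub hβ
        apply ContinuousOn.div
        · exact (continuousOn_const.mul hα).mul ((hψ'cont.comp continuous_snd).continuousOn)
        · exact (hψcont.comp continuous_snd).continuousOn
        · exact hψne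
      · exact ((hψ'cont.comp continuous_snd).continuousOn.div
          ((hψcont.comp continuous_snd).continuousOn) hψne)
  have hKc : IsCompact K := isCompact_Icc.prod isCompact_Icc
  have hKne : K.Nonempty := ⟨(0, a), ⟨⟨le_refl 0, hT.le⟩, ⟨le_refl a, hab.le⟩⟩⟩
  obtain ⟨q, hqK, hqmax⟩ := hKc.exists_isMaxOn hKne hgcont
  set m : ℝ := g q.1 q.2 + 1 with hmdef
  set E : ℝ → ℝ := fun t => Real.exp (m * (t - T)) with hEdef
  have hEpos : ∀ t : ℝ, 0 < E t := fun t => Real.exp_pos _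
  have hEd : ∀ t : ℝ, HasDerivAt E (m * E t) t := by
    intro t
    have h1 : HasDerivAt (fun s : ℝ => m * (s - T)) m t := by
      have := ((hasDerivAt_id t).sub_const T).const_mul m
      simpa using this
    have := h1.exp
    convert this using 1
    ring
  -- modified solution and its derivatives
  set v : ℝ → ℝ → ℝ := fun t y => E t * (ψ y * u t y) with hvdef
  set vt : ℝ → ℝ → ℝ := fun t y => m * E t * (ψ y * u t y) + E t * (ψ y * ut t y) with hvtdef
  set vy : ℝ → ℝ → ℝ := fun t y => E t * (ψ' y * u t y + ψ y * uy t y) with hvydef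
  set vyy : ℝ → ℝ → ℝ := fun t y =>
    E t * ((-2 * N) * u t y + 2 * ψ' y * uy t y + ψ y * uyy t y) with hvyydef
  set B : ℝ → ℝ → ℝ := fun t y => β t y - 2 * α t y * ψ' y / ψ y with hBdef
  set G : ℝ → ℝ → ℝ := fun t y => g t y - m with hGdef
  have hG : ∀ t ∈ Set.Ico 0 T, ∀ z ∈ Set.Ioo a b, G t z < 0 := by
    intro t ht z hz
    have h1 : g t z ≤ g q.1 q.2 :=
      hqmax (show ((t, z) : ℝ × ℝ) ∈ K from ⟨⟨ht.1, ht.2.le⟩, ⟨hz.1.le, hz.2.le⟩⟩)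
    simp only [hGdef, hmdef]; linarith
  have hgm : ∀ t ∈ Set.Ico (0:ℝ) T, ∀ z ∈ Set.Ioo a b, G t z =
      γ t z - m + 2 * N * α t z / ψ z - B t z * (ψ' z / ψ z) := by
    intro t ht z hz
    simp only [hGdef, hgdef, hBdef]; ring
  have hv : ContinuousOn (fun p : ℝ × ℝ => v p.1 p.2) K := by
    apply ContinuousOn.mul
    · exact (((Real.continuous_exp.comp (continuous_const.mul (continuous_id.sub continuous_const))).comp continuous_fst).continuousOn)
    · exact ((hψcont.comp continuous_snd).continuousOn.mul hu)
  have hvt' : ∀ t ∈ Set.Ico 0 T, ∀ z ∈ Set.Ioo a b,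
      HasDerivWithinAt (fun s => v s z) (vt t z) (Set.Icc 0 T) t := by
    intro t ht z hz
    have h1 := ((hEd t).hasDerivWithinAt.mul ((hut t ht z hz).const_mul (ψ z)))
    refine h1.congr_deriv ?_
    all_goals simp only [hvtdef]
  have hvy' : ∀ t ∈ Set.Ico 0 T, ∀ z ∈ Set.Ioo a b,
      HasDerivAt (fun x => v t x) (vy t z) z := by
    intro t ht z hz
    have h1 := ((hψd z).mul (huy t ht z hz)).const_mul (E t)
    refine h1.congr_deriv ?_
    all_goals simp only [hvydef]
  have hvyy' : ∀ t ∈ Set.Ico 0 T, ∀ z ∈ Set.Ioo a b,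
      HasDerivAt (fun x => vy t x) (vyy t z) z := by
    intro t ht z hz
    have h1 : HasDerivAt (fun x => ψ' x * u t x + ψ x * uy t x)
        ((-2 * N) * u t z + ψ' z * uy t z + (ψ' z * uy t z + ψ z * uyy t z)) z := by
      exact ((hψ'd z).mul (huy t ht z hz)).add ((hψd z).mul (huyy t ht z hz))
    have h2 := h1.const_mul (E t)
    refine h2.congr_deriv ?_
    all_goals simp only [hvyydef]; ring
  have hPDEv : ∀ t ∈ Set.Ico 0 T, ∀ z ∈ Set.Ioo a b,
      vt t z + α t z * vyy t z + B t z * vy t z + G t z * v t z = 0 := by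
    intro t ht z hz
    have h0 := hPDE t ht z hz
    have hψz : ψ z ≠ 0 := (hψpos z ⟨hz.1.le, hz.2.le⟩).ne'
    have key : vt t z + α t z * vyy t z + B t z * vy t z + G t z * v t z =
        E t * ψ z * (ut t z + α t z * uyy t z + β t z * uy t z + γ t z * u t z) := by
      simp only [hvtdef, hvyydef, hvydef, hvdef, hBdef, hGdef, hgdef]
      field_simp
      ring
    rw [key, h0, mul_zero]
  -- boundary multipliers
  set r1 : ℝ := ρ1 / ψ a0 with hr1def
  set r2 : ℝ := ρ2 / ψ b0 with hr2def
  have hψa0 : 0 < ψ a0 := hψpos a0 ⟨ha0a.le, ha0b.le⟩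
  have hψb0 : 0 < ψ b0 := hψpos b0 ⟨hb0a.le, hb0b.le⟩
  have hr10 : 0 < r1 := div_pos hρ1 hψa0
  have hr20 : 0 < r2 := div_pos hρ2 hψb0
  have hψa0big : ρ1 < ψ a0 := by
    have h1 : ρ1 / ((a0 - a) * (b - a0)) ≤ N := le_max_left _ _
    have h2 : ρ1 ≤ N * ((a0 - a) * (b - a0)) := by
      rw [div_le_iff₀ hq1] at h1; linarith
    simp only [hψdef]; linarith
  have hψb0big : ρ2 < ψ b0 := by
    have h1 : ρ2 / ((b0 - a) * (b - b0)) ≤ N := le_max_right _ _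
    have h2 : ρ2 ≤ N * ((b0 - a) * (b - b0)) := by
      rw [div_le_iff₀ hq2] at h1; linarith
    simp only [hψdef]; linarith
  have hr11 : r1 < 1 := (div_lt_one hψa0).mpr hψa0big
  have hr21 : r2 < 1 := (div_lt_one hψb0).mpr hψb0big
  have hψa : ψ a = 1 := by simp [hψdef]
  have hψb : ψ b = 1 := by simp [hψdef]
  have hbav : ∀ t ∈ Set.Icc (0:ℝ) T, v t a = r1 * v t a0 := by
    intro t ht
    simp only [hvdef, hψa, hr1def]
    rw [hba t ht]
    field_simp
  have hbbv : ∀ t ∈ Set.Icc (0:ℝ) T, v t b = r2 * v t b0 := by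
    intro t ht
    simp only [hvdef, hψb, hr2def]
    rw [hbb t ht]
    field_simp
  have htermv : ∀ z ∈ Set.Icc a b, v T z = 0 := by
    intro z hz
    simp only [hvdef]
    rw [hterm z hz, mul_zero, mul_zero]
  have hαpos' : ∀ t ∈ Set.Ico 0 T, ∀ z ∈ Set.Ioo a b, 0 ≤ α t z :=
    fun t ht z hz => hαpos t ⟨ht.1, ht.2.le⟩ z ⟨hz.1.le, hz.2.le⟩
  -- apply the maximum principle to v and -v
  have hup := core_maxprin T a b a0 b0 r1 r2 hT hab ⟨ha0a, ha0b⟩ ⟨hb0a, hb0b⟩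
    hr10 hr11 hr20 hr21 α B G hαpos' hG v vt vy vyy hv hvt' hvy' hvyy' hPDEv htermv hbav hbbv
  have hdown := core_maxprin T a b a0 b0 r1 r2 hT hab ⟨ha0a, ha0b⟩ ⟨hb0a, hb0b⟩
    hr10 hr11 hr20 hr21 α B G hαpos' hG (fun t y => -(v t y)) (fun t y => -(vt t y))
    (fun t y => -(vy t y)) (fun t y => -(vyy t y)) hv.neg
    (fun t ht z hz => (hvt' t ht z hz).neg) (fun t ht z hz => (hvy' t ht z hz).neg)
    (fun t ht z hz => (hvyy' t ht z hz).neg)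
    (fun t ht z hz => by
      have h := hPDEv t ht z hz
      show -vt t z + α t z * -vyy t z + B t z * -vy t z + G t z * -v t z = 0
      linear_combination -h)
    (fun z hz => by show -v T z = 0; rw [htermv z hz, neg_zero])
    (fun t ht => by show -v t a = r1 * -v t a0; rw [hbav t ht]; ring)
    (fun t ht => by show -v t b = r2 * -v t b0; rw [hbbv t ht]; ring)
  intro t ht z hz
  have h1 := hup t ht z hz
  have h2 := hdown t ht z hz
  have h2' : -v t z ≤ 0 := h2
  have hv0 : v t z = 0 := le_antisymm h1 (by linarith)
  have hψz : 0 < ψ z := hψpos z hz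
  have hE : 0 < E t := hEpos t
  simp only [hvdef] at hv0
  rcases mul_eq_zero.mp hv0 with h | h
  · exact absurd h hE.ne'
  · rcases mul_eq_zero.mp h with h' | h'
    · exact absurd h' hψz.ne'
    · exact h'
end

section
/- Let a < b, a₀, b₀ ∈ (a,b), T > 0, and Δ := min(a₀ - a, b - a₀, b₀ - a, b - b₀) > 0. Let w : [0,T] → ℝ be continuous with w(0) = 0, t ∈ [0,T], y ∈ (a,b), and define recursively τ₀ = t and, given τ_n < T, τ_{n+1} as the first time r ∈ (τ_n, T] at which y + (w_r - w_t) + (accumulated jump corrections) hits {a, b} (set τ_{n+1} = T if no such time exists), where upon hitting a the trajectory jumps to a₀ and upon hitting b it jumps to b₀. Then whenever two consecutive barrier hitting times τ_n < τ_{n+1} < T occur, |w_{τ_{n+1}} - w_{τ_n}| ≥ Δ; consequently, the number of barrier hitting times before T is finite: there exists N ∈ ℕ with τ_n = T for all n ≥ N. -/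
/-!
After a hit the trajectory restarts at `a₀` or `b₀`, at distance at least `Δ` from both barriers,
so reaching the next barrier forces the driving path to move by at least `Δ`. On the other hand
the hitting times are monotone and bounded, hence convergent, and continuity of `w` makes the
increments `w (τ (n + 1)) - w (τ n)` tend to `0`; so the times cannot stay below `T` forever.
-/

open Filter Topology

lemma le_abs_sub_of_eq_or_eq {a b r e Δ : ℝ} (ha : Δ ≤ r - a) (hb : Δ ≤ b - r)
    (he : e = a ∨ e = b) : Δ ≤ |e - r| := by
  rcases he with rfl | rfl
  · rw [abs_sub_comm]
    exact ha.trans (le_abs_self _)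
  · exact hb.trans (le_abs_self _)

lemma le_abs_sub_restart {a b a0 b0 Δ p c e : ℝ}
    (hΔ : Δ = min (min (a0 - a) (b - a0)) (min (b0 - a) (b - b0)))
    (hit : (p = a ∧ c = a0 - a) ∨ (p = b ∧ c = b0 - b)) (he : e = a ∨ e = b) :
    Δ ≤ |e - (p + c)| := by
  subst hΔ
  rcases hit with ⟨rfl, rfl⟩ | ⟨rfl, rfl⟩ <;> rw [add_sub_cancel] <;>
    refine le_abs_sub_of_eq_or_eq ?_ ?_ he <;> simp

lemma le_abs_sub_of_consecutive_hits {a b a0 b0 Δ y : ℝ} {x c : ℕ → ℝ} {m : ℕ}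
    (hΔ : Δ = min (min (a0 - a) (b - a0)) (min (b0 - a) (b - b0)))
    (hit₁ : (y + x m + ∑ j ∈ Finset.range m, c j = a ∧ c m = a0 - a) ∨
      (y + x m + ∑ j ∈ Finset.range m, c j = b ∧ c m = b0 - b))
    (hit₂ : (y + x (m + 1) + ∑ j ∈ Finset.range (m + 1), c j = a ∧ c (m + 1) = a0 - a) ∨
      (y + x (m + 1) + ∑ j ∈ Finset.range (m + 1), c j = b ∧ c (m + 1) = b0 - b)) :
    Δ ≤ |x (m + 1) - x m| := by
  have hincr : x (m + 1) - x m = (y + x (m + 1) + ∑ j ∈ Finset.range (m + 1), c j) -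
      ((y + x m + ∑ j ∈ Finset.range m, c j) + c m) := by
    rw [Finset.sum_range_succ]
    ring
  rw [hincr]
  exact le_abs_sub_restart hΔ hit₁ (hit₂.imp And.left And.left)

lemma Monotone.tendsto_comp_succ_sub_comp {E : Type*} [TopologicalSpace E] [AddGroup E]
    [IsTopologicalAddGroup E] {s : Set ℝ} (hs : IsClosed s) {w : ℝ → E} (hw : ContinuousOn w s)
    {τ : ℕ → ℝ} (hτ : Monotone τ) (hmem : ∀ n, τ n ∈ s) (hbdd : BddAbove (Set.range τ)) :
    Tendsto (fun n => w (τ (n + 1)) - w (τ n)) atTop (𝓝 0) := by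
  have hlim := tendsto_atTop_ciSup hτ hbdd
  have hL : (⨆ n, τ n) ∈ s := hs.mem_of_tendsto hlim (Eventually.of_forall hmem)
  have hwτ : Tendsto (w ∘ τ) atTop (𝓝 (w (⨆ n, τ n))) :=
    (hw _ hL).tendsto.comp (tendsto_nhdsWithin_iff.mpr ⟨hlim, Eventually.of_forall hmem⟩)
  simpa using (hwτ.comp (tendsto_add_atTop_nat 1)).sub hwτ

/-- `c n` is the jump made at `τ (n + 1)`, and the left side of each equation in `hhit` is the
position just before it. -/
theorem stmt18_general (a b a0 b0 T t y Δ : ℝ)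
    (ha0 : a0 ∈ Set.Ioo a b) (hb0 : b0 ∈ Set.Ioo a b)
    (hΔ : Δ = min (min (a0 - a) (b - a0)) (min (b0 - a) (b - b0)))
    (w : ℝ → ℝ) (hw : ContinuousOn w (Set.Icc 0 T))
    (ht : t ∈ Set.Icc (0:ℝ) T)
    (τ : ℕ → ℝ) (c : ℕ → ℝ)
    (hτmono : Monotone τ)
    (hτle : ∀ n, τ n ≤ T) (hτge : ∀ n, t ≤ τ n)
    (hhit : ∀ n, τ (n + 1) < T →
      (y + (w (τ (n + 1)) - w t) + ∑ j ∈ Finset.range n, c j = a ∧ c n = a0 - a) ∨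
      (y + (w (τ (n + 1)) - w t) + ∑ j ∈ Finset.range n, c j = b ∧ c n = b0 - b)) :
    (∀ n, 1 ≤ n → τ (n + 1) < T → Δ ≤ |w (τ (n + 1)) - w (τ n)|) ∧
    ∃ N : ℕ, ∀ n, N ≤ n → τ n = T := by
  have gap : ∀ n, 1 ≤ n → τ (n + 1) < T → Δ ≤ |w (τ (n + 1)) - w (τ n)| := by
    intro n hn hlt
    obtain ⟨m, rfl⟩ := Nat.exists_eq_add_of_le' hn
    have hit := le_abs_sub_of_consecutive_hits (x := fun n => w (τ (n + 1)) - w t) hΔ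
      (hhit m ((hτmono (by omega)).trans_lt hlt)) (hhit (m + 1) hlt)
    rwa [sub_sub_sub_cancel_right] at hit
  refine ⟨gap, ?_⟩
  suffices ∃ N, τ N = T from
    this.imp fun N (hN : τ N = T) n hn => le_antisymm (hτle n) (hN ▸ hτmono hn)
  by_contra! hne
  have hΔpos : 0 < Δ := by
    rw [hΔ]
    simp only [lt_min_iff, sub_pos]
    exact ⟨ha0, hb0⟩
  have hsmall := (hτmono.tendsto_comp_succ_sub_comp isClosed_Icc hw
    (fun n => ⟨ht.1.trans (hτge n), hτle n⟩) ⟨T, Set.forall_mem_range.2 hτle⟩).eventually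
    (Metric.ball_mem_nhds 0 hΔpos)
  obtain ⟨n, hn, hn1⟩ := (hsmall.and (eventually_ge_atTop 1)).exists
  rw [Real.dist_0_eq_abs] at hn
  exact (gap n hn1 ((hτle _).lt_of_ne (hne _))).not_gt hn

/-- Construction of the uncertainty-zone distance process: the trajectory
`y + (w_s - w_t) + (jump corrections)` restarts at `a₀` upon hitting `a` and at
`b₀` upon hitting `b`.  With `Δ = min(a₀-a, b-a₀, b₀-a, b-b₀) > 0`, between two
consecutive barrier hitting times `τ_n < τ_{n+1} < T` (with `n ≥ 1`) the driving
path satisfies `|w_{τ_{n+1}} - w_{τ_n}| ≥ Δ`; consequently only finitely many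
barrier hitting times occur before `T`: there is `N` with `τ_n = T` for `n ≥ N`.
Here `c n` is the jump correction applied at time `τ_{n+1}`, and
`pre n = y + (w_{τ_{n+1}} - w_t) + Σ_{j<n} c j` is the position just before that
jump. -/
theorem stmt18 (a b a0 b0 T t y Δ : ℝ) (hab : a < b)
    (ha0 : a0 ∈ Set.Ioo a b) (hb0 : b0 ∈ Set.Ioo a b) (hT : 0 < T)
    (hΔ : Δ = min (min (a0 - a) (b - a0)) (min (b0 - a) (b - b0)))
    (w : ℝ → ℝ) (hw : ContinuousOn w (Set.Icc 0 T)) (hw0 : w 0 = 0)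
    (ht : t ∈ Set.Icc (0:ℝ) T) (hy : y ∈ Set.Ioo a b)
    (τ : ℕ → ℝ) (c : ℕ → ℝ)
    (hτ0 : τ 0 = t) (hτmono : Monotone τ)
    (hτle : ∀ n, τ n ≤ T) (hτge : ∀ n, t ≤ τ n)
    (hstick : ∀ n, τ n = T → τ (n + 1) = T)
    (hhit : ∀ n, τ (n + 1) < T →
      (y + (w (τ (n + 1)) - w t) + ∑ j ∈ Finset.range n, c j = a ∧ c n = a0 - a) ∨
      (y + (w (τ (n + 1)) - w t) + ∑ j ∈ Finset.range n, c j = b ∧ c n = b0 - b)) :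
    (∀ n, 1 ≤ n → τ (n + 1) < T → Δ ≤ |w (τ (n + 1)) - w (τ n)|) ∧
    ∃ N : ℕ, ∀ n, N ≤ n → τ n = T :=
  stmt18_general a b a0 b0 T t y Δ ha0 hb0 hΔ w hw ht τ c hτmono hτle hτge hhit
end
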